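/- arXiv:1610.02351 — 6 statements merged into one kernel-verified Lean document; each statement's English description precedes it below -/
import Mathlib

section
/- For a swap permutation matrix P_S (the 2p × 2p permutation matrix that exchanges coordinate j with coordinate j+p for each j in S ⊆ {1,...,p} and fixes all other coordinates), and G = [[Σ, Σ - diag(s)], [Σ - diag(s), Σ]], one has P_S G P_S = G. -/
/-!
`P_S` is the permutation matrix of the involution `swapIdx S`, so conjugating by it permutes
rows and columns of `G` by `swapIdx S`. This permutation moves an entry of `G` between the
diagonal blocks `Σ` and the off-diagonal blocks `Σ - diag s` only when exactly one of its two
indices lies in `S`, i.e. only at an off-diagonal position, where `Σ` and `Σ - diag s` agree.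
-/

open Matrix

/-- The index permutation exchanging `inl j` with `inr j` for `j ∈ S`. -/
def swapIdx {p : ℕ} (S : Finset (Fin p)) : Fin p ⊕ Fin p → Fin p ⊕ Fin p :=
  Sum.elim (fun j => if j ∈ S then Sum.inr j else Sum.inl j)
    (fun j => if j ∈ S then Sum.inl j else Sum.inr j)

/-- The permutation matrix implementing the swap of the pairs `(j, j+p)` for `j ∈ S`. -/
def swapMatrix {p : ℕ} (S : Finset (Fin p)) : Matrix (Fin p ⊕ Fin p) (Fin p ⊕ Fin p) ℝ :=
  Matrix.of fun i k => if swapIdx S i = k then (1 : ℝ) else 0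

section

variable {p : ℕ} (S : Finset (Fin p))

theorem swapIdx_involutive : Function.Involutive (swapIdx S) := by
  rintro (j | j) <;> by_cases hj : j ∈ S <;> simp [swapIdx, hj]

def swapPerm : Equiv.Perm (Fin p ⊕ Fin p) :=
  (swapIdx_involutive S).toPerm _

theorem swapMatrix_eq_toMatrix : swapMatrix S = (swapPerm S).toPEquiv.toMatrix := by
  ext i k
  simp [swapMatrix, swapPerm, PEquiv.toMatrix_apply]

theorem swapMatrix_mul_mul_swapMatrix (M : Matrix (Fin p ⊕ Fin p) (Fin p ⊕ Fin p) ℝ) :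
    swapMatrix S * M * swapMatrix S = M.submatrix (swapIdx S) (swapIdx S) := by
  rw [swapMatrix_eq_toMatrix, PEquiv.toMatrix_toPEquiv_mul, PEquiv.mul_toMatrix_toPEquiv,
    submatrix_submatrix]
  rfl

theorem fromBlocks_submatrix_swapIdx {α : Type*} {A B : Matrix (Fin p) (Fin p) α}
    (hAB : ∀ a b, a ≠ b → A a b = B a b) :
    (fromBlocks A B B A).submatrix (swapIdx S) (swapIdx S) = fromBlocks A B B A := by
  ext (a | a) (b | b) <;> by_cases ha : a ∈ S <;> by_cases hb : b ∈ S <;>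
    simp only [submatrix_apply, swapIdx, Sum.elim_inl, Sum.elim_inr, ha, hb, if_true,
      if_false, fromBlocks_apply₁₁, fromBlocks_apply₁₂, fromBlocks_apply₂₁,
      fromBlocks_apply₂₂] <;>
    first
      | rfl
      | exact hAB a b (by rintro rfl; contradiction)
      | exact (hAB a b (by rintro rfl; contradiction)).symm

end

theorem swapMatrix_conj_eq_general
    {p : ℕ} (S : Finset (Fin p)) (Cov : Matrix (Fin p) (Fin p) ℝ) (s : Fin p → ℝ) :
    swapMatrix S * Matrix.fromBlocks Cov (Cov - Matrix.diagonal s)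
        (Cov - Matrix.diagonal s) Cov * swapMatrix S
      = Matrix.fromBlocks Cov (Cov - Matrix.diagonal s) (Cov - Matrix.diagonal s) Cov := by
  rw [swapMatrix_mul_mul_swapMatrix]
  refine fromBlocks_submatrix_swapIdx S fun a b hab => ?_
  rw [Matrix.sub_apply, diagonal_apply_ne s hab, sub_zero]

/-- For any symmetric `Σ` and any `s`, the covariance matrix
`G = [[Σ, Σ - diag s], [Σ - diag s, Σ]]` is invariant under conjugation by any
swap permutation matrix: `P_S G P_S = G`. -/
theorem swapMatrix_conj_eq
    {p : ℕ} (S : Finset (Fin p)) (Cov : Matrix (Fin p) (Fin p) ℝ) (s : Fin p → ℝ)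
    (hCov : Cov.IsSymm) :
    swapMatrix S * Matrix.fromBlocks Cov (Cov - Matrix.diagonal s)
        (Cov - Matrix.diagonal s) Cov * swapMatrix S
      = Matrix.fromBlocks Cov (Cov - Matrix.diagonal s) (Cov - Matrix.diagonal s) Cov :=
  swapMatrix_conj_eq_general S Cov s
end

section
/- Random variables (X̃_1, ..., X̃_p) are model-free knockoffs for (X_1, ..., X_p) (i.e., (X, X̃)_{swap(S)} =_d (X, X̃) for all S ⊆ {1,...,p}) if and only if for each j ∈ {1,...,p}, the pair (X_j, X̃_j) is exchangeable conditionally on all the other variables and their knockoffs (X_{-j}, X̃_{-j}). -/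
/-!
The swaps `knockoffSwap S` are generated by the singleton swaps, so the knockoff property only
has to be checked for `S = {j}`. Splitting the vector into the pair `(X_j, X̃_j)` and the rest
`(X_{-j}, X̃_{-j})`, the singleton swap becomes `Prod.map id Prod.swap`, and a joint law
`ρ = ρ.fst ⊗ₘ ρ.condKernel` is invariant under `Prod.map id g` exactly when almost every
conditional law is `g`-invariant, by uniqueness of the disintegration.
-/

open MeasureTheory ProbabilityTheory

/-- The swap operation: exchange the coordinate `inl j` (original) with `inr j` (knockoff)
for each `j ∈ S`. -/
def knockoffSwap {p : ℕ} (S : Finset (Fin p)) (v : (Fin p ⊕ Fin p) → ℝ) :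
    (Fin p ⊕ Fin p) → ℝ :=
  Sum.elim (fun j => if j ∈ S then v (Sum.inr j) else v (Sum.inl j))
    (fun j => if j ∈ S then v (Sum.inl j) else v (Sum.inr j))

section Disintegration

variable {α Ω : Type*} {mα : MeasurableSpace α} [MeasurableSpace Ω] [StandardBorelSpace Ω]
  [Nonempty Ω]

lemma MeasureTheory.Measure.map_prodMap_id_eq_self_iff_ae_condKernel (ρ : Measure (α × Ω))
    [IsFiniteMeasure ρ] {g : Ω → Ω} (hg : Measurable g) :
    ρ.map (Prod.map id g) = ρ ↔ ∀ᵐ a ∂ρ.fst, (ρ.condKernel a).map g = ρ.condKernel a := by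
  have hmap : ρ.map (Prod.map id g) = ρ.fst ⊗ₘ ρ.condKernel.map g := by
    rw [Measure.compProd_map hg, ρ.disintegrate ρ.condKernel]
  constructor
  · intro hρ
    filter_upwards [eq_condKernel_of_measure_eq_compProd _ (hmap.symm.trans hρ).symm] with a ha
    rwa [Kernel.map_apply _ hg] at ha
  · intro hae
    rw [hmap]
    conv_rhs => rw [← ρ.disintegrate ρ.condKernel]
    refine Measure.compProd_congr ?_
    filter_upwards [hae] with a ha
    rw [Kernel.map_apply _ hg, ha]

lemma map_prodMk_map_prodMap_id_eq_self_iff_ae_condDistrib {Ω' : Type*} [MeasurableSpace Ω']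
    {μ : Measure Ω'} [IsFiniteMeasure μ] {Z : Ω' → α} {Y : Ω' → Ω} (hY : Measurable Y)
    {g : Ω → Ω} (hg : Measurable g) :
    (μ.map fun ω => (Z ω, Y ω)).map (Prod.map id g) = μ.map (fun ω => (Z ω, Y ω)) ↔
      ∀ᵐ b ∂μ.map Z, condDistrib Y Z μ b = (condDistrib Y Z μ b).map g := by
  rw [Measure.map_prodMap_id_eq_self_iff_ae_condKernel _ hg, Measure.fst_map_prodMk hY,
    condDistrib_def]
  simp only [eq_comm]

end Disintegration

section Swap

variable {p : ℕ}

lemma measurable_knockoffSwap (S : Finset (Fin p)) : Measurable (knockoffSwap S) := by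
  refine measurable_pi_lambda _ fun x => ?_
  rcases x with i | i <;> dsimp only [knockoffSwap, Sum.elim_inl, Sum.elim_inr] <;> split <;>
    exact measurable_pi_apply _

@[simp]
lemma knockoffSwap_empty : knockoffSwap (p := p) ∅ = id := by
  funext v x
  cases x <;> simp [knockoffSwap]

lemma knockoffSwap_insert {j : Fin p} {S : Finset (Fin p)} (hj : j ∉ S) :
    knockoffSwap (insert j S) = knockoffSwap {j} ∘ knockoffSwap S := by
  funext v x
  rcases x with i | i <;> by_cases hij : i = j <;> simp [knockoffSwap, hij, hj]

lemma map_knockoffSwap_eq_self_iff_singleton (ν : Measure ((Fin p ⊕ Fin p) → ℝ)) :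
    (∀ S, ν.map (knockoffSwap S) = ν) ↔ ∀ j, ν.map (knockoffSwap {j}) = ν := by
  refine ⟨fun h j => h {j}, fun h S => ?_⟩
  induction S using Finset.induction_on with
  | empty => simp
  | insert j S hj ih =>
    rw [knockoffSwap_insert hj, ← Measure.map_map (measurable_knockoffSwap _)
      (measurable_knockoffSwap _), ih, h j]

def knockoffSplitEquiv (j : Fin p) :
    ((Fin p ⊕ Fin p) → ℝ) ≃ᵐ (({i // i ≠ j} → ℝ) × ({i // i ≠ j} → ℝ)) × (ℝ × ℝ) where
  toFun v := ((fun i => v (.inl i.1), fun i => v (.inr i.1)), (v (.inl j), v (.inr j)))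
  invFun q := Sum.elim (fun i => if h : i = j then q.2.1 else q.1.1 ⟨i, h⟩)
    (fun i => if h : i = j then q.2.2 else q.1.2 ⟨i, h⟩)
  left_inv v := by
    funext x
    rcases x with i | i <;> dsimp only [Sum.elim_inl, Sum.elim_inr] <;> split_ifs with h
    all_goals first | rfl | (subst h; rfl)
  right_inv q := by
    ext i <;> simp <;> exact fun h => absurd h i.2
  measurable_toFun := by
    refine .prodMk (.prodMk ?_ ?_) (.prodMk ?_ ?_) <;> fun_prop
  measurable_invFun := by
    refine measurable_pi_lambda _ fun x => ?_
    rcases x with i | i <;> simp only [Equiv.coe_fn_symm_mk, Sum.elim_inl, Sum.elim_inr] <;>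
      split <;> fun_prop

lemma knockoffSplitEquiv_knockoffSwap_singleton (j : Fin p) (v : (Fin p ⊕ Fin p) → ℝ) :
    knockoffSplitEquiv j (knockoffSwap {j} v) =
      Prod.map id Prod.swap (knockoffSplitEquiv j v) := by
  ext i <;> simp [knockoffSplitEquiv, knockoffSwap] <;> exact fun h => absurd h i.2

lemma map_knockoffSwap_singleton_eq_self_iff (ν : Measure ((Fin p ⊕ Fin p) → ℝ)) (j : Fin p) :
    ν.map (knockoffSwap {j}) = ν ↔
      (ν.map (knockoffSplitEquiv j)).map (Prod.map id Prod.swap) =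
        ν.map (knockoffSplitEquiv j) := by
  have hcomm : knockoffSplitEquiv j ∘ knockoffSwap {j} =
      Prod.map id Prod.swap ∘ knockoffSplitEquiv j :=
    funext (knockoffSplitEquiv_knockoffSwap_singleton j)
  rw [← (knockoffSplitEquiv j).map_measurableEquiv_injective.eq_iff,
    Measure.map_map (knockoffSplitEquiv j).measurable (measurable_knockoffSwap _), hcomm,
    Measure.map_map (measurable_id.prodMap measurable_swap) (knockoffSplitEquiv j).measurable]

end Swap

/-- `X̃` is a model-free knockoff for `X` (i.e. `(X, X̃)_{swap(S)} =_d (X, X̃)` for all `S`)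
if and only if for every `j` the pair `(X_j, X̃_j)` is exchangeable conditionally on all the
other variables and their knockoffs. -/
theorem knockoff_iff_conditionally_exchangeable_pairs
    {Ω : Type*} [MeasurableSpace Ω] {μ : Measure Ω} [IsProbabilityMeasure μ]
    {p : ℕ} (X Xt : Ω → Fin p → ℝ) (hX : Measurable X) (hXt : Measurable Xt) :
    (∀ S : Finset (Fin p),
      μ.map (fun ω => knockoffSwap S (Sum.elim (X ω) (Xt ω)))
        = μ.map (fun ω => Sum.elim (X ω) (Xt ω)))
    ↔
    (∀ j : Fin p,
      ∀ᵐ b ∂(μ.map (fun ω =>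
        ((fun i : {i : Fin p // i ≠ j} => X ω i.1),
         (fun i : {i : Fin p // i ≠ j} => Xt ω i.1)))),
        condDistrib (fun ω => (X ω j, Xt ω j))
          (fun ω => ((fun i : {i : Fin p // i ≠ j} => X ω i.1),
            (fun i : {i : Fin p // i ≠ j} => Xt ω i.1))) μ b
        = (condDistrib (fun ω => (X ω j, Xt ω j))
            (fun ω => ((fun i : {i : Fin p // i ≠ j} => X ω i.1),
              (fun i : {i : Fin p // i ≠ j} => Xt ω i.1))) μ b).map Prod.swap) := by
  have hF : Measurable fun ω => Sum.elim (X ω) (Xt ω) := measurable_pi_lambda _ fun x => by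
    cases x <;> [exact (measurable_pi_apply _).comp hX; exact (measurable_pi_apply _).comp hXt]
  have hmap (S : Finset (Fin p)) : μ.map (fun ω => knockoffSwap S (Sum.elim (X ω) (Xt ω))) =
      (μ.map fun ω => Sum.elim (X ω) (Xt ω)).map (knockoffSwap S) :=
    (Measure.map_map (measurable_knockoffSwap S) hF).symm
  simp only [hmap, map_knockoffSwap_eq_self_iff_singleton, map_knockoffSwap_singleton_eq_self_iff,
    Measure.map_map (knockoffSplitEquiv _).measurable hF]
  refine forall_congr' fun j => ?_
  exact map_prodMk_map_prodMap_id_eq_self_iff_ae_condDistrib (by fun_prop) measurable_swap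
end

section
/- Under the same coin-flip sign hypothesis on the null W_j's, define the knockoffs threshold τ = min{ t ∈ {|W_j| : |W_j| > 0} : #{j : W_j ≤ -t} / max(#{j : W_j ≥ t}, 1) ≤ q } and Ŝ = {j : W_j ≥ τ}. Then the modified FDR is controlled: E[ |Ŝ ∩ H_0| / (|Ŝ| + 1/q) ] ≤ q. -/
open MeasureTheory ProbabilityTheory

/-- The set of candidate thresholds for knockoffs at level `q`: positive magnitudes `t` of the
statistics such that `#{j : W_j ≤ -t} / max(#{j : W_j ≥ t}, 1) ≤ q`. -/
noncomputable def knockoffCandidates {p : ℕ} (q : ℝ) (W : Fin p → ℝ) : Finset ℝ :=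
  (Finset.univ.image fun j => |W j|).filter fun t => 0 < t ∧
    (((Finset.univ.filter fun j => W j ≤ -t).card : ℝ)) /
      max ((Finset.univ.filter fun j => t ≤ W j).card : ℝ) 1 ≤ q

/-- The knockoff selection set `Ŝ = {j : W_j ≥ τ}`, where `τ` is the minimal candidate
threshold (and `Ŝ = ∅` if there is no candidate threshold, i.e. `τ = +∞`). -/
noncomputable def knockoffSelected {p : ℕ} (q : ℝ) (W : Fin p → ℝ) : Finset (Fin p) :=
  if h : (knockoffCandidates q W).Nonempty then
    Finset.univ.filter fun j => (knockoffCandidates q W).min' h ≤ W j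
  else ∅

namespace KnockoffAux


noncomputable def cnt (n : ℕ) (S : Finset ℕ) (k : ℕ) : ℕ :=
  ((Finset.range (n - k)).filter (· ∈ S)).card

open Classical in
noncomputable def stopF (n : ℕ) (D : ℕ → ℕ → Prop) (S : Finset ℕ) : Finset ℕ :=
  (Finset.range (n+1)).filter (fun k => D k (cnt n S k))

noncomputable def G (n : ℕ) (D : ℕ → ℕ → Prop) (S : Finset ℕ) : ℝ :=
  if h : (stopF n D S).Nonempty then
    (cnt n S ((stopF n D S).min' h) : ℝ) /
      (1 + (((n - (stopF n D S).min' h) - cnt n S ((stopF n D S).min' h) : ℕ) : ℝ))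
  else 0

lemma G_nonneg (n : ℕ) (D : ℕ → ℕ → Prop) (S : Finset ℕ) : 0 ≤ G n D S := by
  unfold G
  split
  · positivity
  · exact le_refl _

lemma cnt_le (n : ℕ) (S : Finset ℕ) (k : ℕ) : cnt n S k ≤ n - k := by
  calc cnt n S k ≤ (Finset.range (n-k)).card := Finset.card_filter_le _ _
  _ = n - k := Finset.card_range _

lemma cnt_zero_subset (n : ℕ) (S : Finset ℕ) (hS : S ⊆ Finset.range n) :
    cnt n S 0 = S.card := by
  unfold cnt
  rw [Nat.sub_zero]
  congr 1
  rw [Finset.filter_mem_eq_inter, Finset.inter_eq_right.mpr hS]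

lemma cnt_erase (n : ℕ) (S : Finset ℕ) (k : ℕ) :
    cnt (n+1) S (k+1) = cnt n (S.erase n) k := by
  unfold cnt
  have h1 : n + 1 - (k+1) = n - k := by omega
  rw [h1]
  congr 1
  apply Finset.filter_congr
  intro x hx
  simp only [Finset.mem_range] at hx
  have : x ≠ n := by omega
  simp [Finset.mem_erase, this]

lemma stopF_succ (n : ℕ) (D : ℕ → ℕ → Prop) (S : Finset ℕ)
    (h0 : ¬ D 0 (cnt (n+1) S 0)) :
    stopF (n+1) D S = (stopF n (fun k c => D (k+1) c) (S.erase n)).image (· + 1) := by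
  unfold stopF
  ext k
  simp only [Finset.mem_filter, Finset.mem_range, Finset.mem_image]
  constructor
  · rintro ⟨hk, hD⟩
    rcases Nat.eq_zero_or_pos k with rfl | hpos
    · exact absurd hD h0
    · obtain ⟨k', rfl⟩ : ∃ k', k = k' + 1 := ⟨k - 1, by omega⟩
      exact ⟨k', ⟨⟨by omega, by rwa [← cnt_erase]⟩, rfl⟩⟩
  · rintro ⟨k', ⟨⟨hk', hD⟩, rfl⟩⟩
    exact ⟨by omega, by rwa [cnt_erase]⟩

lemma G_succ (n : ℕ) (D : ℕ → ℕ → Prop) (S : Finset ℕ)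
    (h0 : ¬ D 0 (cnt (n+1) S 0)) :
    G (n+1) D S = G n (fun k c => D (k+1) c) (S.erase n) := by
  unfold G
  have hst := stopF_succ n D S h0
  by_cases h : (stopF n (fun k c => D (k+1) c) (S.erase n)).Nonempty
  · have h2 : (stopF (n+1) D S).Nonempty := by
      rw [hst]; exact h.image _
    rw [dif_pos h2, dif_pos h]
    have hmin : (stopF (n+1) D S).min' h2
        = (stopF n (fun k c => D (k+1) c) (S.erase n)).min' h + 1 := by
      apply le_antisymm
      · apply Finset.min'_le
        rw [hst]
        exact Finset.mem_image_of_mem _ (Finset.min'_mem _ h)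
      · have hm2 : (stopF (n+1) D S).min' h2
            ∈ (stopF n (fun k c => D (k+1) c) (S.erase n)).image (· + 1) := by
          rw [← hst]; exact Finset.min'_mem _ h2
        obtain ⟨k', hk', hkeq⟩ := Finset.mem_image.mp hm2
        rw [← hkeq]
        have := Finset.min'_le _ _ hk'
        omega
    rw [hmin, cnt_erase]
    congr 3
    omega
  · have h2 : ¬ (stopF (n+1) D S).Nonempty := by
      rw [hst]
      simpa [Finset.image_nonempty] using h
    rw [dif_neg h2, dif_neg h]

lemma arith_key (n u : ℕ) :
    (n.choose (u+1) : ℝ)*(u+1)/(1+((n-(u+1):ℕ):ℝ)) + (n.choose u : ℝ)*u/(1+((n-u:ℕ):ℝ))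
      ≤ ((n+1).choose (u+1) : ℝ)*(u+1)/(1+((n-u:ℕ):ℝ)) := by
  rcases le_or_gt (u+1) n with h | h
  · -- equality case
    have k1 : (n.choose (u+1) : ℝ) * (u+1) = (n.choose u : ℝ) * ((n-u:ℕ):ℝ) := by
      exact_mod_cast congrArg (Nat.cast (R := ℝ)) (Nat.choose_succ_right_eq n u)
    have k2 : ((n:ℝ)+1) * (n.choose u : ℝ) = ((n+1).choose (u+1) : ℝ) * (u+1) := by
      have := Nat.add_one_mul_choose_eq n u
      exact_mod_cast congrArg (Nat.cast (R := ℝ)) this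
    have k3 : ((n-(u+1):ℕ):ℝ) + 1 = ((n-u:ℕ):ℝ) := by
      have : (n-(u+1)) + 1 = n - u := by omega
      exact_mod_cast congrArg (Nat.cast (R := ℝ)) this
    have k4 : ((n-u:ℕ):ℝ) + (u:ℝ) = n := by
      have : (n-u) + u = n := by omega
      exact_mod_cast congrArg (Nat.cast (R := ℝ)) this
    have hx : (0:ℝ) < 1 + ((n-(u+1):ℕ):ℝ) := by positivity
    have hy : (0:ℝ) < 1 + ((n-u:ℕ):ℝ) := by positivity
    have e1 : (n.choose (u+1) : ℝ)*(u+1)/(1+((n-(u+1):ℕ):ℝ)) = (n.choose u : ℝ) := by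
      rw [k1, ← k3, mul_div_assoc, add_comm (1:ℝ), div_self (by positivity : ((n-(u+1):ℕ):ℝ) + 1 ≠ 0), mul_one]
    have e2 : (n.choose u:ℝ) * (1 + ((n-u:ℕ):ℝ)) + (n.choose u:ℝ)*u
        = ((n+1).choose (u+1):ℝ)*(u+1) := by
      calc (n.choose u:ℝ) * (1 + ((n-u:ℕ):ℝ)) + (n.choose u:ℝ)*u
          = (n.choose u:ℝ) * ((1 + ((n-u:ℕ):ℝ)) + u) := by ring
        _ = (n.choose u:ℝ) * ((n:ℝ)+1) := by
            rw [show (1 + ((n-u:ℕ):ℝ)) + u = (n:ℝ)+1 by linarith [k4]]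
        _ = ((n+1).choose (u+1):ℝ)*(u+1) := by rw [← k2]; ring
    rw [e1, add_div' _ _ _ (ne_of_gt hy), div_le_div_iff₀ hy hy]
    nlinarith [e2, hy]
  · -- n ≤ u
    have hnu : n ≤ u := by omega
    have z1 : n.choose (u+1) = 0 := Nat.choose_eq_zero_of_lt (by omega)
    have z2 : n - (u+1) = 0 := by omega
    have z3 : n - u = 0 := by omega
    rw [z1, z2, z3]
    simp only [Nat.cast_zero, add_zero, zero_mul, zero_div, zero_add, div_one]
    rcases eq_or_lt_of_le hnu with h' | h'
    · have c1 : n.choose u = 1 := by rw [← h']; exact Nat.choose_self n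
      have c2 : (n+1).choose (u+1) = 1 := by rw [← h']; exact Nat.choose_self (n+1)
      rw [c1, c2]
      push_cast
      nlinarith [(Nat.cast_nonneg u : (0:ℝ) ≤ u)]
    · have c1 : n.choose u = 0 := Nat.choose_eq_zero_of_lt h'
      rw [c1]
      simp only [Nat.cast_zero, zero_mul]
      positivity

lemma G_cnt_zero {n : ℕ} {D : ℕ → ℕ → Prop} {S : Finset ℕ}
    (h : ∀ k, cnt n S k = 0) : G n D S = 0 := by
  unfold G
  split
  · simp [h]
  · rfl

lemma L (n : ℕ) : ∀ (D : ℕ → ℕ → Prop) (v : ℕ),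
    (∑ S ∈ (Finset.range n).powerset, (if S.card = v then G n D S else 0))
      ≤ (n.choose v : ℝ) * v / (1 + ((n - v : ℕ) : ℝ)) := by
  induction n with
  | zero =>
    intro D v
    rw [Finset.range_zero, Finset.powerset_empty, Finset.sum_singleton]
    have hG : G 0 D (∅ : Finset ℕ) = 0 := by
      apply G_cnt_zero
      intro k
      simp [cnt]
    rw [hG]
    have : (if (∅ : Finset ℕ).card = v then (0:ℝ) else 0) = 0 := by split <;> rfl
    rw [this]
    positivity
  | succ n IH =>
    intro D v
    by_cases hD : D 0 v
    · -- stop immediately at stage 0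
      have key : ∀ S ∈ (Finset.range (n+1)).powerset,
          (if S.card = v then G (n+1) D S else 0)
          = if S.card = v then ((v:ℝ) / (1 + (((n+1) - v : ℕ):ℝ))) else 0 := by
        intro S hS
        by_cases hc : S.card = v
        · rw [if_pos hc, if_pos hc]
          have hc0 : cnt (n+1) S 0 = v := by
            rw [cnt_zero_subset _ _ (Finset.mem_powerset.mp hS)]; exact hc
          have h0mem : 0 ∈ stopF (n+1) D S := by
            classical
            simp only [stopF, Finset.mem_filter, Finset.mem_range]
            exact ⟨by omega, by rw [hc0]; exact hD⟩
          have hne : (stopF (n+1) D S).Nonempty := ⟨0, h0mem⟩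
          have hmin : (stopF (n+1) D S).min' hne = 0 :=
            le_antisymm (Finset.min'_le _ _ h0mem) (Nat.zero_le _)
          unfold G
          rw [dif_pos hne, hmin, hc0]
          norm_num
        · rw [if_neg hc, if_neg hc]
      rw [Finset.sum_congr rfl key, ← Finset.sum_filter, ← Finset.powersetCard_eq_filter,
        Finset.sum_const, Finset.card_powersetCard, Finset.card_range, nsmul_eq_mul,
        mul_div_assoc]
    · -- shift the stopping rule
      have hnotin : n ∉ Finset.range n := by simp
      rw [Finset.range_add_one, Finset.sum_powerset_insert hnotin]
      have key1 : ∀ S ∈ (Finset.range n).powerset,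
          (if S.card = v then G (n+1) D S else 0)
          = if S.card = v then G n (fun k c => D (k+1) c) S else 0 := by
        intro S hS
        by_cases hc : S.card = v
        · rw [if_pos hc, if_pos hc]
          have hsub : S ⊆ Finset.range (n+1) :=
            (Finset.mem_powerset.mp hS).trans (by intro x; simp; omega)
          have h0 : ¬ D 0 (cnt (n+1) S 0) := by
            rw [cnt_zero_subset _ _ hsub, hc]; exact hD
          have hnmem : n ∉ S := fun hn => by
            have := Finset.mem_powerset.mp hS hn; simp at this
          rw [G_succ n D S h0, Finset.erase_eq_of_notMem hnmem]
        · rw [if_neg hc, if_neg hc]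
      have key2 : ∀ S ∈ (Finset.range n).powerset,
          (if (insert n S).card = v then G (n+1) D (insert n S) else 0)
          = if S.card + 1 = v then G n (fun k c => D (k+1) c) S else 0 := by
        intro S hS
        have hnmem : n ∉ S := fun hn => by
          have := Finset.mem_powerset.mp hS hn; simp at this
        have hcard : (insert n S).card = S.card + 1 := Finset.card_insert_of_notMem hnmem
        by_cases hc : S.card + 1 = v
        · rw [hcard, if_pos hc, if_pos hc]
          have hsub : insert n S ⊆ Finset.range (n+1) := by
            intro x hx
            rcases Finset.mem_insert.mp hx with rfl | hx'
            · simp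
            · have := Finset.mem_powerset.mp hS hx'
              simp at this ⊢
              omega
          have h0 : ¬ D 0 (cnt (n+1) (insert n S) 0) := by
            rw [cnt_zero_subset _ _ hsub, hcard, hc]; exact hD
          rw [G_succ n D _ h0, Finset.erase_insert hnmem]
        · rw [hcard, if_neg hc, if_neg hc]
      rw [Finset.sum_congr rfl key1, Finset.sum_congr rfl key2]
      rcases Nat.eq_zero_or_pos v with rfl | hv
      · have h2 : (∑ S ∈ (Finset.range n).powerset,
            (if S.card + 1 = 0 then G n (fun k c => D (k+1) c) S else 0)) = 0 := by
          apply Finset.sum_eq_zero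
          intro S _
          simp
        rw [h2, add_zero]
        refine (IH _ 0).trans ?_
        simp
      · obtain ⟨u, rfl⟩ : ∃ u, v = u + 1 := ⟨v - 1, by omega⟩
        have h2 : ∀ S : Finset ℕ, (S.card + 1 = u + 1) = (S.card = u) := by
          intro S; simp
        simp only [h2]
        refine ((add_le_add (IH _ (u+1)) (IH _ u)).trans ?_)
        have hsub : (n + 1) - (u + 1) = n - u := by omega
        rw [hsub]
        push_cast
        push_cast at *
        exact arith_key n u

lemma term_le (n v : ℕ) (hv : v ≤ n) :
    (n.choose v : ℝ) * v / (1 + ((n - v : ℕ) : ℝ)) ≤ (n.choose (v-1) : ℝ) := by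
  rcases Nat.eq_zero_or_pos v with rfl | hpos
  · simp
  · obtain ⟨u, rfl⟩ : ∃ u, v = u + 1 := ⟨v - 1, by omega⟩
    have k1 : (n.choose (u+1) : ℝ) * (u+1) = (n.choose u : ℝ) * ((n-u:ℕ):ℝ) := by
      exact_mod_cast congrArg (Nat.cast (R := ℝ)) (Nat.choose_succ_right_eq n u)
    have k3 : ((n-(u+1):ℕ):ℝ) + 1 = ((n-u:ℕ):ℝ) := by
      have : (n-(u+1)) + 1 = n - u := by omega
      exact_mod_cast congrArg (Nat.cast (R := ℝ)) this
    have hgoal : (n.choose (u+1) : ℝ) * ((u:ℝ)+1) / (1+((n-(u+1):ℕ):ℝ)) = (n.choose u : ℝ) := by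
      rw [k1, ← k3, mul_div_assoc, add_comm (1:ℝ),
        div_self (by positivity : ((n-(u+1):ℕ):ℝ) + 1 ≠ 0), mul_one]
    push_cast
    rw [hgoal]

lemma G_sum_le (n : ℕ) (D : ℕ → ℕ → Prop) :
    (∑ S ∈ (Finset.range n).powerset, G n D S) ≤ (2:ℝ)^n := by
  have h1 : ∀ S ∈ (Finset.range n).powerset,
      G n D S = ∑ v ∈ Finset.range (n+1), (if S.card = v then G n D S else 0) := by
    intro S hS
    rw [Finset.sum_ite_eq (Finset.range (n+1)) S.card (fun _ => G n D S)]
    rw [if_pos]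
    simp only [Finset.mem_range]
    have := Finset.card_le_card (Finset.mem_powerset.mp hS)
    rw [Finset.card_range] at this
    omega
  rw [Finset.sum_congr rfl h1, Finset.sum_comm]
  calc (∑ v ∈ Finset.range (n+1), ∑ S ∈ (Finset.range n).powerset,
          (if S.card = v then G n D S else 0))
      ≤ ∑ v ∈ Finset.range (n+1), (n.choose v : ℝ) * v / (1 + ((n - v : ℕ) : ℝ)) :=
        Finset.sum_le_sum (fun v _ => L n D v)
    _ ≤ ∑ v ∈ Finset.range (n+1), (n.choose (v-1) : ℝ) := by
        apply Finset.sum_le_sum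
        intro v hv
        exact term_le n v (by simp at hv; omega)
    _ = ((∑ v ∈ Finset.range (n+1), n.choose (v-1) : ℕ) : ℝ) := by push_cast; ring
    _ ≤ (2:ℝ)^n := by
        have : (∑ v ∈ Finset.range (n+1), n.choose (v-1)) = 2^n := by
          rw [Finset.sum_range_succ']
          simp only [Nat.add_sub_cancel]
          have h2 : (∑ i ∈ Finset.range n, n.choose i) = 2^n - 1 := by
            have := Nat.sum_range_choose n
            rw [Finset.sum_range_succ] at this
            simp at this
            omega
          rw [h2]
          simp
          have : 1 ≤ 2^n := Nat.one_le_two_pow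
          omega
        rw [this]
        norm_num


lemma downset_eq_range (A : Finset ℕ) (h : ∀ i j : ℕ, i ≤ j → j ∈ A → i ∈ A) :
    A = Finset.range A.card := by
  ext x
  simp only [Finset.mem_range]
  constructor
  · intro hx
    have hsub : Finset.range (x+1) ⊆ A := by
      intro y hy
      exact h y x (by simpa using Nat.lt_succ_iff.mp (Finset.mem_range.mp hy)) hx
    have := Finset.card_le_card hsub
    rw [Finset.card_range] at this
    omega
  · intro hx
    by_contra hmem
    have hsub : A ⊆ Finset.range x := by
      intro y hy
      simp only [Finset.mem_range]
      by_contra hyx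
      exact hmem (h x y (by omega) hy)
    have := Finset.card_le_card hsub
    rw [Finset.card_range] at this
    omega

variable {p : ℕ}

/-- Flip the signs of the coordinates in `T`. -/
def flipSet (T : Finset (Fin p)) (w : Fin p → ℝ) : Fin p → ℝ :=
  fun j => if j ∈ T then -(w j) else w j

lemma abs_flipSet (T : Finset (Fin p)) (w : Fin p → ℝ) (j : Fin p) :
    |flipSet T w j| = |w j| := by
  unfold flipSet
  split <;> simp

lemma flipSet_notmem {T : Finset (Fin p)} {w : Fin p → ℝ} {j : Fin p} (h : j ∉ T) :
    flipSet T w j = w j := if_neg h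

open Classical in
/-- The set of "positive sign" indices corresponding to a flip set `T`. -/
noncomputable def STset (n : ℕ) (e : ℕ → Fin p) (w : Fin p → ℝ) (T : Finset (Fin p)) :
    Finset ℕ :=
  (Finset.range n).filter
    (fun i => if w (e i) = 0 then e i ∈ T else 0 < flipSet T w (e i))

open Classical in
/-- Inverse map: recover the flip set from the sign pattern. -/
noncomputable def PSIset (n : ℕ) (e : ℕ → Fin p) (w : Fin p → ℝ) (H₀ : Finset (Fin p))
    (S : Finset ℕ) : Finset (Fin p) :=
  ((Finset.range n).filter
    (fun i => if w (e i) = 0 then i ∈ S else ¬ ((i ∈ S) ↔ 0 < w (e i)))).image e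

open Classical in
/-- Number of (null) indices with magnitude at least `t`. -/
noncomputable def rkOf (H₀ : Finset (Fin p)) (w : Fin p → ℝ) (t : ℝ) : ℕ :=
  (H₀.filter fun j => t ≤ |w j|).card

lemma rkOf_le (H₀ : Finset (Fin p)) (w : Fin p → ℝ) (t : ℝ) :
    rkOf H₀ w t ≤ H₀.card := by
  classical
  exact Finset.card_filter_le _ _

lemma rkOf_antitone (H₀ : Finset (Fin p)) (w : Fin p → ℝ) {t t' : ℝ} (h : t ≤ t') :
    rkOf H₀ w t' ≤ rkOf H₀ w t := by
  classical
  apply Finset.card_le_card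
  intro j hj
  simp only [Finset.mem_filter] at *
  exact ⟨hj.1, le_trans h hj.2⟩

section Main

variable (n : ℕ) (e : ℕ → Fin p) (w : Fin p → ℝ) (H₀ : Finset (Fin p))

/-- `e` enumerates `H₀` in decreasing order of magnitude. -/
structure GoodEnum : Prop where
  card_eq : H₀.card = n
  mem : ∀ i < n, e i ∈ H₀
  inj : ∀ i < n, ∀ i' < n, e i = e i' → i = i'
  surj : ∀ j ∈ H₀, ∃ i < n, e i = j
  anti : ∀ i ≤ n - 1, ∀ i' ≤ n - 1, i ≤ i' → |w (e i')| ≤ |w (e i)|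

variable {n e w H₀}

/-- Prefix property: indices with magnitude ≥ t form an initial segment of length `rkOf t`. -/
lemma prefix_prop (he : GoodEnum n e w H₀) (t : ℝ) :
    ∀ i < n, (t ≤ |w (e i)| ↔ i < rkOf H₀ w t) := by
  classical
  set A : Finset ℕ := (Finset.range n).filter (fun i => t ≤ |w (e i)|) with hA
  have hdown : ∀ i j : ℕ, i ≤ j → j ∈ A → i ∈ A := by
    intro i j hij hj
    simp only [hA, Finset.mem_filter, Finset.mem_range] at *
    refine ⟨by omega, le_trans hj.2 (he.anti i (by omega) j (by omega) hij)⟩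
  have hcard : A.card = rkOf H₀ w t := by
    unfold rkOf
    apply Finset.card_nbij (fun i => e i)
    · intro a ha
      simp only [hA, Finset.mem_coe, Finset.mem_filter, Finset.mem_range] at *
      exact ⟨he.mem a ha.1, ha.2⟩
    · intro a ha b hb hab
      simp only [hA, Set.mem_setOf_eq, Finset.mem_coe, Finset.mem_filter, Finset.mem_range] at ha hb
      exact he.inj a ha.1 b hb.1 hab
    · intro j hj
      simp only [Finset.mem_coe, Finset.mem_filter] at hj
      obtain ⟨i, hi, rfl⟩ := he.surj j hj.1
      refine ⟨i, ?_, rfl⟩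
      rw [hA]
      exact Finset.mem_coe.mpr (Finset.mem_filter.mpr ⟨Finset.mem_range.mpr hi, hj.2⟩)
  have hrange : A = Finset.range (rkOf H₀ w t) := by rw [← hcard]; exact downset_eq_range A hdown
  intro i hi
  constructor
  · intro ht
    have : i ∈ A := by
      rw [hA, Finset.mem_filter]
      exact ⟨Finset.mem_range.mpr hi, ht⟩
    rw [hrange] at this
    simpa using this
  · intro hlt
    have : i ∈ A := by rw [hrange]; simpa using hlt
    simp only [hA, Finset.mem_filter] at this
    exact this.2


lemma mem_STset {n : ℕ} {e : ℕ → Fin p} {w : Fin p → ℝ} {T : Finset (Fin p)} {i : ℕ} :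
    i ∈ STset n e w T ↔ i < n ∧
      (if w (e i) = 0 then e i ∈ T else 0 < flipSet T w (e i)) := by
  classical
  simp [STset, Finset.mem_filter, Finset.mem_range]

lemma count_pos (he : GoodEnum n e w H₀) {T : Finset (Fin p)} {t : ℝ} (ht : 0 < t) :
    (H₀.filter fun j => t ≤ flipSet T w j).card
      = cnt n (STset n e w T) (n - rkOf H₀ w t) := by
  classical
  have hrk : rkOf H₀ w t ≤ n := he.card_eq ▸ rkOf_le H₀ w t
  unfold cnt
  rw [show n - (n - rkOf H₀ w t) = rkOf H₀ w t by omega]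
  symm
  apply Finset.card_nbij (fun i => e i)
  · intro a ha
    simp only [Finset.mem_coe, Finset.mem_filter, Finset.mem_range] at ha
    obtain ⟨halt, haS⟩ := ha
    have han : a < n := by omega
    have habs : t ≤ |w (e a)| := (prefix_prop he t a han).mpr halt
    have hwne : w (e a) ≠ 0 := by
      intro h0; rw [h0] at habs; simp at habs; linarith
    have hpos : 0 < flipSet T w (e a) := by
      rcases mem_STset.mp haS with ⟨-, hcond⟩
      rwa [if_neg hwne] at hcond
    simp only [Finset.mem_coe, Finset.mem_filter]
    refine ⟨he.mem a han, ?_⟩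
    rw [← abs_of_pos hpos, abs_flipSet]
    exact habs
  · intro a ha b hb hab
    simp only [Finset.mem_coe, Finset.mem_filter, Finset.mem_range] at ha hb
    exact he.inj a (by omega) b (by omega) hab
  · intro j hj
    simp only [Finset.mem_coe, Finset.mem_filter] at hj
    obtain ⟨hjH, hjt⟩ := hj
    obtain ⟨i, hi, rfl⟩ := he.surj j hjH
    have hflip : 0 < flipSet T w (e i) := lt_of_lt_of_le ht hjt
    have habs : t ≤ |w (e i)| := by
      rw [← abs_flipSet T w (e i), abs_of_pos hflip]; exact hjt
    have hwne : w (e i) ≠ 0 := by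
      intro h0; rw [h0] at habs; simp at habs; linarith
    refine ⟨i, ?_, rfl⟩
    simp only [Finset.mem_coe, Finset.mem_filter, Finset.mem_range]
    exact ⟨(prefix_prop he t i hi).mp habs,
      mem_STset.mpr ⟨hi, by rw [if_neg hwne]; exact hflip⟩⟩

lemma count_neg (he : GoodEnum n e w H₀) {T : Finset (Fin p)} {t : ℝ} (ht : 0 < t) :
    (H₀.filter fun j => flipSet T w j ≤ -t).card
      = rkOf H₀ w t - cnt n (STset n e w T) (n - rkOf H₀ w t) := by
  classical
  have hrk : rkOf H₀ w t ≤ n := he.card_eq ▸ rkOf_le H₀ w t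
  have hsplit := Finset.card_filter_add_card_filter_not
    (s := Finset.range (rkOf H₀ w t)) (p := (· ∈ STset n e w T))
  have hcnt : cnt n (STset n e w T) (n - rkOf H₀ w t)
      = ((Finset.range (rkOf H₀ w t)).filter (· ∈ STset n e w T)).card := by
    unfold cnt
    rw [show n - (n - rkOf H₀ w t) = rkOf H₀ w t by omega]
  have hmain : (H₀.filter fun j => flipSet T w j ≤ -t).card
      = ((Finset.range (rkOf H₀ w t)).filter (fun i => ¬ i ∈ STset n e w T)).card := by
    symm
    apply Finset.card_nbij (fun i => e i)
    · intro a ha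
      simp only [Finset.mem_coe, Finset.mem_filter, Finset.mem_range] at ha
      obtain ⟨halt, haS⟩ := ha
      have han : a < n := by omega
      have habs : t ≤ |w (e a)| := (prefix_prop he t a han).mpr halt
      have hwne : w (e a) ≠ 0 := by
        intro h0; rw [h0] at habs; simp at habs; linarith
      have hnpos : ¬ (0 < flipSet T w (e a)) := by
        intro hpos
        exact haS (mem_STset.mpr ⟨han, by rw [if_neg hwne]; exact hpos⟩)
      have habsf : t ≤ |flipSet T w (e a)| := by rw [abs_flipSet]; exact habs
      have hneg : flipSet T w (e a) ≤ 0 := le_of_not_gt hnpos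
      simp only [Finset.mem_coe, Finset.mem_filter]
      refine ⟨he.mem a han, ?_⟩
      rw [abs_of_nonpos hneg] at habsf
      linarith
    · intro a ha b hb hab
      simp only [Finset.mem_coe, Finset.mem_filter, Finset.mem_range] at ha hb
      exact he.inj a (by omega) b (by omega) hab
    · intro j hj
      simp only [Finset.mem_coe, Finset.mem_filter] at hj
      obtain ⟨hjH, hjt⟩ := hj
      obtain ⟨i, hi, rfl⟩ := he.surj j hjH
      have hneg : flipSet T w (e i) < 0 := by linarith
      have habs : t ≤ |w (e i)| := by
        rw [← abs_flipSet T w (e i), abs_of_neg hneg]; linarith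
      have hwne : w (e i) ≠ 0 := by
        intro h0; rw [h0] at habs; simp at habs; linarith
      refine ⟨i, ?_, rfl⟩
      simp only [Finset.mem_coe, Finset.mem_filter, Finset.mem_range]
      refine ⟨(prefix_prop he t i hi).mp habs, ?_⟩
      intro hmem
      rcases mem_STset.mp hmem with ⟨-, hcond⟩
      rw [if_neg hwne] at hcond
      linarith
  rw [hmain, hcnt]
  rw [Finset.card_range] at hsplit
  omega

lemma count_split_pos {T : Finset (Fin p)} (hT : T ⊆ H₀) (t : ℝ) :
    (Finset.univ.filter fun j => t ≤ flipSet T w j).card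
      = (Finset.univ.filter fun j : Fin p => j ∉ H₀ ∧ t ≤ w j).card
        + (H₀.filter fun j => t ≤ flipSet T w j).card := by
  classical
  have hsplit := Finset.card_filter_add_card_filter_not
    (s := Finset.univ.filter fun j => t ≤ flipSet T w j) (p := (· ∈ H₀))
  have h1 : ((Finset.univ.filter fun j => t ≤ flipSet T w j).filter (· ∈ H₀))
      = H₀.filter (fun j => t ≤ flipSet T w j) := by
    ext j
    simp only [Finset.mem_filter, Finset.mem_univ, true_and]
    tauto
  have h2 : ((Finset.univ.filter fun j => t ≤ flipSet T w j).filter (fun j => ¬ j ∈ H₀))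
      = Finset.univ.filter (fun j : Fin p => j ∉ H₀ ∧ t ≤ w j) := by
    ext j
    simp only [Finset.mem_filter, Finset.mem_univ, true_and]
    constructor
    · rintro ⟨hφ, hj⟩
      rw [flipSet_notmem (fun hmem => hj (hT hmem))] at hφ
      exact ⟨hj, hφ⟩
    · rintro ⟨hj, hφ⟩
      rw [flipSet_notmem (fun hmem => hj (hT hmem))]
      exact ⟨hφ, hj⟩
  rw [h1, h2] at hsplit
  omega

lemma count_split_neg {T : Finset (Fin p)} (hT : T ⊆ H₀) (t : ℝ) :
    (Finset.univ.filter fun j => flipSet T w j ≤ -t).card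
      = (Finset.univ.filter fun j : Fin p => j ∉ H₀ ∧ w j ≤ -t).card
        + (H₀.filter fun j => flipSet T w j ≤ -t).card := by
  classical
  have hsplit := Finset.card_filter_add_card_filter_not
    (s := Finset.univ.filter fun j => flipSet T w j ≤ -t) (p := (· ∈ H₀))
  have h1 : ((Finset.univ.filter fun j => flipSet T w j ≤ -t).filter (· ∈ H₀))
      = H₀.filter (fun j => flipSet T w j ≤ -t) := by
    ext j
    simp only [Finset.mem_filter, Finset.mem_univ, true_and]
    tauto
  have h2 : ((Finset.univ.filter fun j => flipSet T w j ≤ -t).filter (fun j => ¬ j ∈ H₀))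
      = Finset.univ.filter (fun j : Fin p => j ∉ H₀ ∧ w j ≤ -t) := by
    ext j
    simp only [Finset.mem_filter, Finset.mem_univ, true_and]
    constructor
    · rintro ⟨hφ, hj⟩
      rw [flipSet_notmem (fun hmem => hj (hT hmem))] at hφ
      exact ⟨hj, hφ⟩
    · rintro ⟨hj, hφ⟩
      rw [flipSet_notmem (fun hmem => hj (hT hmem))]
      exact ⟨hφ, hj⟩
  rw [h1, h2] at hsplit
  omega

end Main

open Classical in
noncomputable def nnp (H₀ : Finset (Fin p)) (w : Fin p → ℝ) (t : ℝ) : ℕ :=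
  (Finset.univ.filter fun j : Fin p => j ∉ H₀ ∧ t ≤ w j).card

open Classical in
noncomputable def nnm (H₀ : Finset (Fin p)) (w : Fin p → ℝ) (t : ℝ) : ℕ :=
  (Finset.univ.filter fun j : Fin p => j ∉ H₀ ∧ w j ≤ -t).card

/-- The knockoff stopping criterion, expressed through the null-sign count `c`. -/
noncomputable def critP (H₀ : Finset (Fin p)) (w : Fin p → ℝ) (q t : ℝ) (c : ℕ) : Prop :=
  ((nnm H₀ w t + (rkOf H₀ w t - c) : ℕ) : ℝ) / max ((nnp H₀ w t + c : ℕ) : ℝ) 1 ≤ q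

/-- The stopping rule on (stage, count) pairs induced by the knockoff threshold search. -/
noncomputable def DP (n : ℕ) (H₀ : Finset (Fin p)) (w : Fin p → ℝ) (q : ℝ) :
    ℕ → ℕ → Prop :=
  fun k c => ∃ j : Fin p, 0 < |w j| ∧ rkOf H₀ w |w j| = n - k ∧ n - rkOf H₀ w |w j| = k ∧
    critP H₀ w q |w j| c

section Main2

variable {n : ℕ} {e : ℕ → Fin p} {w : Fin p → ℝ} {H₀ : Finset (Fin p)}

lemma cand_iff (he : GoodEnum n e w H₀) {T : Finset (Fin p)} (hT : T ⊆ H₀) (q : ℝ) (t : ℝ) :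
    t ∈ knockoffCandidates q (flipSet T w) ↔
      ((∃ j : Fin p, |w j| = t) ∧ 0 < t ∧
        critP H₀ w q t (cnt n (STset n e w T) (n - rkOf H₀ w t))) := by
  classical
  unfold knockoffCandidates
  rw [Finset.mem_filter]
  have himg : (t ∈ Finset.univ.image fun j => |flipSet T w j|) ↔ ∃ j : Fin p, |w j| = t := by
    simp [abs_flipSet]
  constructor
  · rintro ⟨himg', h0, hratio⟩
    refine ⟨himg.mp himg', h0, ?_⟩
    rw [count_split_neg hT t, count_neg he h0, count_split_pos hT t, count_pos he h0] at hratio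
    unfold critP nnm nnp
    exact hratio
  · rintro ⟨hj, h0, hcrit⟩
    refine ⟨himg.mpr hj, h0, ?_⟩
    rw [count_split_neg hT t, count_neg he h0, count_split_pos hT t, count_pos he h0]
    unfold critP nnm nnp at hcrit
    exact hcrit

lemma stop_iff (he : GoodEnum n e w H₀) {T : Finset (Fin p)} (hT : T ⊆ H₀) (q : ℝ) (k : ℕ) :
    k ∈ stopF n (DP n H₀ w q) (STset n e w T) ↔
      (k ≤ n ∧ ∃ t ∈ knockoffCandidates q (flipSet T w), n - rkOf H₀ w t = k) := by
  classical
  have hmem : k ∈ stopF n (DP n H₀ w q) (STset n e w T) ↔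
      k < n + 1 ∧ DP n H₀ w q k (cnt n (STset n e w T) k) := by
    simp [stopF, Finset.mem_filter, Finset.mem_range]
  rw [hmem]
  constructor
  · rintro ⟨hk, j, hj0, hjrk, hjrk', hjcrit⟩
    refine ⟨by omega, |w j|, ?_, hjrk'⟩
    rw [cand_iff he hT q]
    refine ⟨⟨j, rfl⟩, hj0, ?_⟩
    rw [hjrk']
    exact hjcrit
  · rintro ⟨hk, t, htc, htk⟩
    rw [cand_iff he hT q] at htc
    obtain ⟨⟨j, rfl⟩, h0, hcrit⟩ := htc
    have hrkle : rkOf H₀ w |w j| ≤ n := he.card_eq ▸ rkOf_le H₀ w _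
    refine ⟨by omega, j, h0, by omega, htk, ?_⟩
    rw [htk] at hcrit
    exact hcrit

lemma stop_nonempty_iff (he : GoodEnum n e w H₀) {T : Finset (Fin p)} (hT : T ⊆ H₀) (q : ℝ) :
    (stopF n (DP n H₀ w q) (STset n e w T)).Nonempty ↔
      (knockoffCandidates q (flipSet T w)).Nonempty := by
  constructor
  · rintro ⟨k, hk⟩
    rw [stop_iff he hT] at hk
    obtain ⟨-, t, htc, -⟩ := hk
    exact ⟨t, htc⟩
  · rintro ⟨t, ht⟩
    have hrkle : rkOf H₀ w t ≤ n := he.card_eq ▸ rkOf_le H₀ w _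
    exact ⟨n - rkOf H₀ w t, (stop_iff he hT q _).mpr ⟨by omega, t, ht, rfl⟩⟩

lemma min_eq (he : GoodEnum n e w H₀) {T : Finset (Fin p)} (hT : T ⊆ H₀) (q : ℝ)
    (hc : (knockoffCandidates q (flipSet T w)).Nonempty)
    (hs : (stopF n (DP n H₀ w q) (STset n e w T)).Nonempty) :
    (stopF n (DP n H₀ w q) (STset n e w T)).min' hs
      = n - rkOf H₀ w ((knockoffCandidates q (flipSet T w)).min' hc) := by
  apply le_antisymm
  · apply Finset.min'_le
    rw [stop_iff he hT]
    have hrkle : rkOf H₀ w ((knockoffCandidates q (flipSet T w)).min' hc) ≤ n :=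
      he.card_eq ▸ rkOf_le H₀ w _
    exact ⟨by omega, _, Finset.min'_mem _ hc, rfl⟩
  · have hmem := Finset.min'_mem _ hs
    rw [stop_iff he hT] at hmem
    obtain ⟨hk, t, htc, htk⟩ := hmem
    have h1 : (knockoffCandidates q (flipSet T w)).min' hc ≤ t := Finset.min'_le _ _ htc
    have h2 := rkOf_antitone H₀ w h1
    omega

end Main2

section Main3

variable {n : ℕ} {e : ℕ → Fin p} {w : Fin p → ℝ} {H₀ : Finset (Fin p)}

lemma perT (he : GoodEnum n e w H₀) {T : Finset (Fin p)} (hT : T ⊆ H₀) {q : ℝ}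
    (hq0 : 0 < q) :
    (((knockoffSelected q (flipSet T w)) ∩ H₀).card : ℝ) /
        (((knockoffSelected q (flipSet T w)).card : ℝ) + 1 / q)
      ≤ q * G n (DP n H₀ w q) (STset n e w T) := by
  classical
  by_cases hc : (knockoffCandidates q (flipSet T w)).Nonempty
  · have hs : (stopF n (DP n H₀ w q) (STset n e w T)).Nonempty :=
      (stop_nonempty_iff he hT q).mpr hc
    set τ := (knockoffCandidates q (flipSet T w)).min' hc with hτ
    have hτmem := Finset.min'_mem _ hc
    rw [← hτ] at hτmem
    rw [cand_iff he hT] at hτmem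
    obtain ⟨-, hτ0, hτcrit⟩ := hτmem
    have hrkle : rkOf H₀ w τ ≤ n := he.card_eq ▸ rkOf_le H₀ w _
    set c := cnt n (STset n e w T) (n - rkOf H₀ w τ) with hc_def
    -- the selected set
    have hsel : knockoffSelected q (flipSet T w)
        = Finset.univ.filter fun j => τ ≤ flipSet T w j := by
      unfold knockoffSelected
      rw [dif_pos hc]
    have hselcard : (knockoffSelected q (flipSet T w)).card = nnp H₀ w τ + c := by
      rw [hsel, count_split_pos hT τ, count_pos he hτ0]
      rfl
    have hselH : ((knockoffSelected q (flipSet T w)) ∩ H₀).card = c := by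
      have : (knockoffSelected q (flipSet T w)) ∩ H₀
          = H₀.filter fun j => τ ≤ flipSet T w j := by
        rw [hsel]
        ext j
        simp only [Finset.mem_inter, Finset.mem_filter, Finset.mem_univ, true_and]
        tauto
      rw [this, count_pos he hτ0]
    -- the G value
    have hmin := min_eq he hT q hc hs
    have hGval : G n (DP n H₀ w q) (STset n e w T)
        = (c : ℝ) / (1 + ((rkOf H₀ w τ - c : ℕ) : ℝ)) := by
      unfold G
      rw [dif_pos hs, hmin, ← hτ]
      have hnn : n - (n - rkOf H₀ w τ) = rkOf H₀ w τ := by omega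
      rw [hnn, ← hc_def]
    rw [hselcard, hselH, hGval]
    -- now the arithmetic
    rcases Nat.eq_zero_or_pos c with hc0 | hcpos
    · rw [hc0]
      simp only [Nat.cast_zero, zero_div]
      positivity
    · -- c ≥ 1 : use the criterion
      unfold critP at hτcrit
      have hmax : max ((nnp H₀ w τ + c : ℕ) : ℝ) 1 = ((nnp H₀ w τ + c : ℕ) : ℝ) := by
        apply max_eq_left
        have : 1 ≤ nnp H₀ w τ + c := by omega
        exact_mod_cast this
      rw [hmax] at hτcrit
      have hden : (0:ℝ) < ((nnp H₀ w τ + c : ℕ) : ℝ) := by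
        have : 0 < nnp H₀ w τ + c := by omega
        exact_mod_cast this
      rw [div_le_iff₀ hden] at hτcrit
      have hVm : ((rkOf H₀ w τ - c : ℕ) : ℝ) ≤ q * ((nnp H₀ w τ + c : ℕ) : ℝ) := by
        have : ((rkOf H₀ w τ - c : ℕ) : ℝ) ≤ ((nnm H₀ w τ + (rkOf H₀ w τ - c) : ℕ) : ℝ) := by
          exact_mod_cast Nat.le_add_left _ _
        linarith
    -- goal : c / (nnp + c + 1/q) ≤ q * (c / (1 + V⁻))
      have hX : (0:ℝ) < ((nnp H₀ w τ + c : ℕ) : ℝ) + 1/q := by positivity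
      have hY : (0:ℝ) < 1 + ((rkOf H₀ w τ - c : ℕ) : ℝ) := by positivity
      rw [mul_div_assoc', div_le_div_iff₀ hX hY]
      have hkey : 1 + ((rkOf H₀ w τ - c : ℕ) : ℝ) ≤ q * (((nnp H₀ w τ + c : ℕ) : ℝ) + 1/q) := by
        rw [mul_add, mul_one_div, div_self (ne_of_gt hq0)]
        linarith
      have hcc : (0:ℝ) ≤ (c:ℝ) := Nat.cast_nonneg _
      calc (c:ℝ) * (1 + ((rkOf H₀ w τ - c : ℕ) : ℝ))
          ≤ (c:ℝ) * (q * (((nnp H₀ w τ + c : ℕ) : ℝ) + 1/q)) :=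
            mul_le_mul_of_nonneg_left hkey hcc
        _ = q * (c:ℝ) * (((nnp H₀ w τ + c : ℕ) : ℝ) + 1/q) := by ring
    -- need to match cast of (nnp + c : ℕ) with sum casts
  · -- no candidate: selected set is empty
    have hsel : knockoffSelected q (flipSet T w) = ∅ := by
      unfold knockoffSelected
      rw [dif_neg hc]
    rw [hsel]
    simp only [Finset.empty_inter, Finset.card_empty, Nat.cast_zero, zero_div]
    exact mul_nonneg (le_of_lt hq0) (G_nonneg _ _ _)

end Main3

section Main4

variable {n : ℕ} {e : ℕ → Fin p} {w : Fin p → ℝ} {H₀ : Finset (Fin p)}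

lemma mem_PSIset (he : GoodEnum n e w H₀) {S : Finset ℕ} {i : ℕ} (hi : i < n) :
    e i ∈ PSIset n e w H₀ S ↔
      (if w (e i) = 0 then i ∈ S else ¬ ((i ∈ S) ↔ 0 < w (e i))) := by
  classical
  unfold PSIset
  rw [Finset.mem_image]
  constructor
  · rintro ⟨i', hi', heq⟩
    rw [Finset.mem_filter, Finset.mem_range] at hi'
    have : i' = i := he.inj i' hi'.1 i hi heq
    rw [← this]
    rw [this] at hi' ⊢
    exact hi'.2
  · intro hcond
    exact ⟨i, Finset.mem_filter.mpr ⟨Finset.mem_range.mpr hi, hcond⟩, rfl⟩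

lemma PSIset_STset (he : GoodEnum n e w H₀) {T : Finset (Fin p)} (hT : T ⊆ H₀) :
    PSIset n e w H₀ (STset n e w T) = T := by
  classical
  ext j
  constructor
  · intro hj
    unfold PSIset at hj
    rw [Finset.mem_image] at hj
    obtain ⟨i, hi, rfl⟩ := hj
    rw [Finset.mem_filter, Finset.mem_range] at hi
    obtain ⟨hin, hcond⟩ := hi
    by_cases h0 : w (e i) = 0
    · rw [if_pos h0] at hcond
      rw [mem_STset, if_pos h0] at hcond
      exact hcond.2
    · rw [if_neg h0] at hcond
      by_contra hmem
      apply hcond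
      rw [mem_STset, if_neg h0]
      unfold flipSet
      rw [if_neg hmem]
      simp [hin]
  · intro hj
    have hjH : j ∈ H₀ := hT hj
    obtain ⟨i, hin, rfl⟩ := he.surj j hjH
    rw [mem_PSIset he hin]
    by_cases h0 : w (e i) = 0
    · rw [if_pos h0, mem_STset, if_pos h0]
      exact ⟨hin, hj⟩
    · rw [if_neg h0, mem_STset, if_neg h0]
      unfold flipSet
      rw [if_pos hj]
      rcases lt_or_gt_of_ne h0 with hneg | hpos
      · intro hiff
        have h1 : 0 < -w (e i) := by linarith
        have := hiff.mp ⟨hin, h1⟩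
        linarith
      · intro hiff
        have h2 : ¬ (0 < -w (e i)) := by linarith
        have := hiff.mpr hpos
        exact h2 this.2
  
lemma STset_PSIset (he : GoodEnum n e w H₀) {S : Finset ℕ} (hS : S ⊆ Finset.range n) :
    STset n e w (PSIset n e w H₀ S) = S := by
  classical
  ext i
  rw [mem_STset]
  constructor
  · rintro ⟨hin, hcond⟩
    by_cases h0 : w (e i) = 0
    · rw [if_pos h0] at hcond
      rw [mem_PSIset he hin, if_pos h0] at hcond
      exact hcond
    · rw [if_neg h0] at hcond
      unfold flipSet at hcond
      by_cases hmem : e i ∈ PSIset n e w H₀ S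
      · rw [if_pos hmem] at hcond
        rw [mem_PSIset he hin, if_neg h0] at hmem
        by_contra hiS
        apply hmem
        constructor
        · intro h; exact absurd h hiS
        · intro h; linarith
      · rw [if_neg hmem] at hcond
        rw [mem_PSIset he hin, if_neg h0] at hmem
        by_contra hiS
        exact hmem (fun hiff => hiS (hiff.mpr hcond))
  · intro hiS
    have hin : i < n := Finset.mem_range.mp (hS hiS)
    refine ⟨hin, ?_⟩
    by_cases h0 : w (e i) = 0
    · rw [if_pos h0, mem_PSIset he hin, if_pos h0]
      exact hiS
    · rw [if_neg h0]
      unfold flipSet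
      by_cases hmem : e i ∈ PSIset n e w H₀ S
      · rw [if_pos hmem]
        rw [mem_PSIset he hin, if_neg h0] at hmem
        rcases lt_or_gt_of_ne h0 with hneg | hpos
        · linarith
        · exact absurd (Iff.intro (fun _ => hpos) (fun _ => hiS)) hmem
      · rw [if_neg hmem]
        rw [mem_PSIset he hin, if_neg h0] at hmem
        have hiff := not_not.mp hmem
        rcases lt_or_gt_of_ne h0 with hneg | hpos
        · linarith [hiff.mp hiS]
        · exact hpos

lemma sum_G_bij (he : GoodEnum n e w H₀) (D : ℕ → ℕ → Prop) :
    (∑ T ∈ H₀.powerset, G n D (STset n e w T))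
      = ∑ S ∈ (Finset.range n).powerset, G n D S := by
  classical
  apply Finset.sum_nbij' (i := fun T => STset n e w T) (j := fun S => PSIset n e w H₀ S)
  · intro T hT
    rw [Finset.mem_powerset]
    unfold STset
    exact Finset.filter_subset _ _
  · intro S hS
    rw [Finset.mem_powerset] at *
    unfold PSIset
    intro j hj
    rw [Finset.mem_image] at hj
    obtain ⟨i, hi, rfl⟩ := hj
    rw [Finset.mem_filter, Finset.mem_range] at hi
    exact he.mem i hi.1
  · intro T hT
    exact PSIset_STset he (Finset.mem_powerset.mp hT)
  · intro S hS
    exact STset_PSIset he (Finset.mem_powerset.mp hS)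
  · intro T hT
    rfl

end Main4

lemma exists_goodEnum (w : Fin p → ℝ) (H₀ : Finset (Fin p)) (hne : H₀.Nonempty) :
    ∃ e : ℕ → Fin p, GoodEnum H₀.card e w H₀ := by
  classical
  obtain ⟨j₀, hj₀⟩ := hne
  set n := H₀.card with hn
  let g : {x // x ∈ H₀} ≃ Fin n := H₀.equivFin
  let f0 : Fin n → ℝ := fun i => -|w (g.symm i).val|
  let π : Equiv.Perm (Fin n) := Tuple.sort f0
  have mono : Monotone (f0 ∘ π) := Tuple.monotone_sort f0
  refine ⟨fun i => if h : i < n then (g.symm (π ⟨i, h⟩)).val else j₀, ?_, ?_, ?_, ?_, ?_⟩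
  · rfl
  · intro i hi
    rw [dif_pos hi]
    exact (g.symm (π ⟨i, hi⟩)).2
  · intro i hi i' hi' heq
    rw [dif_pos hi, dif_pos hi'] at heq
    have h1 : g.symm (π ⟨i, hi⟩) = g.symm (π ⟨i', hi'⟩) := Subtype.ext heq
    have h2 : π ⟨i, hi⟩ = π ⟨i', hi'⟩ := g.symm.injective h1
    have h3 : (⟨i, hi⟩ : Fin n) = ⟨i', hi'⟩ := π.injective h2
    exact congrArg Fin.val h3
  · intro j hj
    refine ⟨(π.symm (g ⟨j, hj⟩)).val, (π.symm (g ⟨j, hj⟩)).isLt, ?_⟩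
    rw [dif_pos (π.symm (g ⟨j, hj⟩)).isLt]
    have : (⟨(π.symm (g ⟨j, hj⟩)).val, (π.symm (g ⟨j, hj⟩)).isLt⟩ : Fin n)
        = π.symm (g ⟨j, hj⟩) := Fin.eta _ _
    rw [this, Equiv.apply_symm_apply, Equiv.symm_apply_apply]
  · intro i hi i' hi' hii'
    have hn1 : 1 ≤ n := Finset.card_pos.mpr ⟨j₀, hj₀⟩
    have hi2 : i < n := by omega
    have hi'2 : i' < n := by omega
    rw [dif_pos hi2, dif_pos hi'2]
    have := mono (show (⟨i, hi2⟩ : Fin n) ≤ ⟨i', hi'2⟩ from hii')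
    simp only [Function.comp_apply, f0] at this
    linarith

lemma det_bound (q : ℝ) (hq0 : 0 < q) (H₀ : Finset (Fin p)) (w : Fin p → ℝ) :
    (∑ T ∈ H₀.powerset, (((knockoffSelected q (flipSet T w)) ∩ H₀).card : ℝ) /
        (((knockoffSelected q (flipSet T w)).card : ℝ) + 1 / q))
      ≤ q * 2 ^ H₀.card := by
  rcases Finset.eq_empty_or_nonempty H₀ with rfl | hne
  · rw [Finset.powerset_empty, Finset.sum_singleton]
    simp only [Finset.inter_empty, Finset.card_empty, Nat.cast_zero, zero_div,
      Finset.card_empty, pow_zero, mul_one]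
    exact le_of_lt hq0
  · obtain ⟨e, he⟩ := exists_goodEnum w H₀ hne
    calc (∑ T ∈ H₀.powerset, (((knockoffSelected q (flipSet T w)) ∩ H₀).card : ℝ) /
          (((knockoffSelected q (flipSet T w)).card : ℝ) + 1 / q))
        ≤ ∑ T ∈ H₀.powerset,
            q * G H₀.card (DP H₀.card H₀ w q) (STset H₀.card e w T) :=
          Finset.sum_le_sum (fun T hT => perT he (Finset.mem_powerset.mp hT) hq0)
      _ = q * ∑ T ∈ H₀.powerset, G H₀.card (DP H₀.card H₀ w q) (STset H₀.card e w T) := by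
          rw [Finset.mul_sum]
      _ = q * ∑ S ∈ (Finset.range H₀.card).powerset, G H₀.card (DP H₀.card H₀ w q) S := by
          rw [sum_G_bij he]
      _ ≤ q * 2 ^ H₀.card := by
          apply mul_le_mul_of_nonneg_left (G_sum_le _ _) (le_of_lt hq0)

section Meas

variable {p : ℕ} (q : ℝ)

lemma meas_cardm (j : Fin p) :
    Measurable (fun w : Fin p → ℝ =>
      ((Finset.univ.filter fun i => w i ≤ -|w j|).card : ℝ)) := by
  have heq : (fun w : Fin p → ℝ => ((Finset.univ.filter fun i => w i ≤ -|w j|).card : ℝ))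
      = fun w => ∑ i : Fin p, if w i ≤ -|w j| then (1:ℝ) else 0 := by
    funext w
    rw [Finset.card_filter]
    push_cast
    rfl
  rw [heq]
  apply Finset.measurable_sum
  intro i _
  exact Measurable.ite
    (measurableSet_le (measurable_pi_apply i) ((measurable_pi_apply j).abs.neg))
    measurable_const measurable_const

lemma meas_cardp (j : Fin p) :
    Measurable (fun w : Fin p → ℝ =>
      ((Finset.univ.filter fun i => |w j| ≤ w i).card : ℝ)) := by
  have heq : (fun w : Fin p → ℝ => ((Finset.univ.filter fun i => |w j| ≤ w i).card : ℝ))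
      = fun w => ∑ i : Fin p, if |w j| ≤ w i then (1:ℝ) else 0 := by
    funext w
    rw [Finset.card_filter]
    push_cast
    rfl
  rw [heq]
  apply Finset.measurable_sum
  intro i _
  exact Measurable.ite
    (measurableSet_le ((measurable_pi_apply j).abs) (measurable_pi_apply i))
    measurable_const measurable_const

lemma meas_candProp (j : Fin p) :
    MeasurableSet {w : Fin p → ℝ | |w j| ∈ knockoffCandidates q w} := by
  have heq : {w : Fin p → ℝ | |w j| ∈ knockoffCandidates q w}
      = {w : Fin p → ℝ | 0 < |w j|} ∩
        {w : Fin p → ℝ |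
          ((Finset.univ.filter fun i => w i ≤ -|w j|).card : ℝ) /
            max ((Finset.univ.filter fun i => |w j| ≤ w i).card : ℝ) 1 ≤ q} := by
    ext w
    simp only [Set.mem_setOf_eq, Set.mem_inter_iff]
    unfold knockoffCandidates
    rw [Finset.mem_filter]
    constructor
    · rintro ⟨-, h0, hr⟩
      exact ⟨h0, hr⟩
    · rintro ⟨h0, hr⟩
      exact ⟨Finset.mem_image.mpr ⟨j, Finset.mem_univ j, rfl⟩, h0, hr⟩
  rw [heq]
  apply MeasurableSet.inter
  · exact measurableSet_lt measurable_const (measurable_pi_apply j).abs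
  · exact measurableSet_le
      ((meas_cardm j).div ((meas_cardp j).max measurable_const)) measurable_const

lemma meas_sel_eq (S : Finset (Fin p)) :
    MeasurableSet {w : Fin p → ℝ | knockoffSelected q w = S} := by
  classical
  have heq : {w : Fin p → ℝ | knockoffSelected q w = S}
      = ((if S = ∅ then {w : Fin p → ℝ | ∀ j, ¬ |w j| ∈ knockoffCandidates q w} else ∅)
        ∪ ⋃ j₀ : Fin p,
            ({w : Fin p → ℝ | |w j₀| ∈ knockoffCandidates q w}
              ∩ {w | ∀ j, |w j| ∈ knockoffCandidates q w → |w j₀| ≤ |w j|}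
              ∩ {w | ∀ i : Fin p, i ∈ S ↔ |w j₀| ≤ w i})) := by
    ext w
    simp only [Set.mem_setOf_eq, Set.mem_union, Set.mem_iUnion, Set.mem_inter_iff]
    constructor
    · intro hsel
      by_cases hc : (knockoffCandidates q w).Nonempty
      · right
        have hτmem := Finset.min'_mem _ hc
        have hτimg : (knockoffCandidates q w).min' hc ∈ Finset.univ.image fun j => |w j| := by
          have : knockoffCandidates q w ⊆ Finset.univ.image fun j => |w j| := by
            unfold knockoffCandidates
            exact Finset.filter_subset _ _
          exact this hτmem
      
        obtain ⟨j₀, -, hj₀⟩ := Finset.mem_image.mp hτimg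
        refine ⟨j₀, ⟨by rw [hj₀]; exact hτmem, ?_⟩, ?_⟩
        · intro j hj
          rw [hj₀]
          exact Finset.min'_le _ _ hj
        · intro i
          rw [← hsel]
          unfold knockoffSelected
          rw [dif_pos hc]
          rw [Finset.mem_filter, hj₀]
          simp
      · left
        have hS : S = ∅ := by
          rw [← hsel]
          unfold knockoffSelected
          rw [dif_neg hc]
        rw [if_pos hS]
        intro j hj
        exact hc ⟨_, hj⟩
    · intro h
      rcases h with hE | ⟨j₀, ⟨hj₀c, hj₀min⟩, hj₀S⟩
      · split at hE
        · rename_i hS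
          have hc : ¬ (knockoffCandidates q w).Nonempty := by
            rintro ⟨t, ht⟩
            have htimg : t ∈ Finset.univ.image fun j => |w j| := by
              have : knockoffCandidates q w ⊆ Finset.univ.image fun j => |w j| := by
                unfold knockoffCandidates
                exact Finset.filter_subset _ _
              exact this ht
            obtain ⟨j, -, rfl⟩ := Finset.mem_image.mp htimg
            exact hE j ht
          unfold knockoffSelected
          rw [dif_neg hc, hS]
        · exact absurd hE (Set.notMem_empty w)
      · have hc : (knockoffCandidates q w).Nonempty := ⟨_, hj₀c⟩
        have hτ : (knockoffCandidates q w).min' hc = |w j₀| := by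
          apply le_antisymm (Finset.min'_le _ _ hj₀c)
          apply Finset.le_min'
          intro t ht
          have htimg : t ∈ Finset.univ.image fun j => |w j| := by
            have : knockoffCandidates q w ⊆ Finset.univ.image fun j => |w j| := by
              unfold knockoffCandidates
              exact Finset.filter_subset _ _
            exact this ht
          obtain ⟨j, -, rfl⟩ := Finset.mem_image.mp htimg
          exact hj₀min j ht
        unfold knockoffSelected
        rw [dif_pos hc]
        ext i
        rw [Finset.mem_filter, hτ]
        constructor
        · rintro ⟨-, hi⟩
          exact (hj₀S i).mpr hi
        · intro hi
          exact ⟨Finset.mem_univ i, (hj₀S i).mp hi⟩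
  rw [heq]
  apply MeasurableSet.union
  · split
    · have : {w : Fin p → ℝ | ∀ j, ¬ |w j| ∈ knockoffCandidates q w}
          = ⋂ j : Fin p, {w : Fin p → ℝ | |w j| ∈ knockoffCandidates q w}ᶜ := by
        ext w
        simp [Set.mem_iInter]
      rw [this]
      exact MeasurableSet.iInter (fun j => (meas_candProp q j).compl)
    · exact MeasurableSet.empty
  · apply MeasurableSet.iUnion
    intro j₀
    apply MeasurableSet.inter
    · apply MeasurableSet.inter
      · exact meas_candProp q j₀
      · have : {w : Fin p → ℝ | ∀ j, |w j| ∈ knockoffCandidates q w → |w j₀| ≤ |w j|}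
            = ⋂ j : Fin p, ({w : Fin p → ℝ | |w j| ∈ knockoffCandidates q w}ᶜ
              ∪ {w : Fin p → ℝ | |w j₀| ≤ |w j|}) := by
          ext w
          simp only [Set.mem_setOf_eq, Set.mem_iInter, Set.mem_union, Set.mem_compl_iff]
          constructor
          · intro h j
            by_cases hj : |w j| ∈ knockoffCandidates q w
            · exact Or.inr (h j hj)
            · exact Or.inl hj
          · intro h j hj
            rcases h j with h' | h'
            · exact absurd hj h'
            · exact h'
        rw [this]
        apply MeasurableSet.iInter
        intro j
        exact ((meas_candProp q j).compl).union
          (measurableSet_le (measurable_pi_apply j₀).abs (measurable_pi_apply j).abs)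
    · have : {w : Fin p → ℝ | ∀ i : Fin p, i ∈ S ↔ |w j₀| ≤ w i}
          = ⋂ i : Fin p, (if i ∈ S then {w : Fin p → ℝ | |w j₀| ≤ w i}
            else {w : Fin p → ℝ | |w j₀| ≤ w i}ᶜ) := by
        ext w
        simp only [Set.mem_setOf_eq, Set.mem_iInter]
        constructor
        · intro h i
          by_cases hi : i ∈ S
          · rw [if_pos hi]
            exact (h i).mp hi
          · rw [if_neg hi]
            exact fun hle => hi ((h i).mpr hle)
        · intro h i
          by_cases hi : i ∈ S
          · have := h i
            rw [if_pos hi] at this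
            exact ⟨fun _ => this, fun _ => hi⟩
          · have := h i
            rw [if_neg hi] at this
            exact ⟨fun hmem => absurd hmem hi, fun hle => absurd hle this⟩
      rw [this]
      apply MeasurableSet.iInter
      intro i
      split
      · exact measurableSet_le (measurable_pi_apply j₀).abs (measurable_pi_apply i)
      · exact (measurableSet_le (measurable_pi_apply j₀).abs (measurable_pi_apply i)).compl

lemma meas_f (H₀ : Finset (Fin p)) :
    Measurable (fun w : Fin p → ℝ =>
      (((knockoffSelected q w) ∩ H₀).card : ℝ) /
        (((knockoffSelected q w).card : ℝ) + 1 / q)) := by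
  classical
  have heq : (fun w : Fin p → ℝ =>
      (((knockoffSelected q w) ∩ H₀).card : ℝ) /
        (((knockoffSelected q w).card : ℝ) + 1 / q))
      = fun w => ∑ S : Finset (Fin p),
          if knockoffSelected q w = S then
            (((S ∩ H₀).card : ℝ) / ((S.card : ℝ) + 1 / q)) else 0 := by
    funext w
    rw [Finset.sum_ite_eq Finset.univ (knockoffSelected q w)
      (fun S => (((S ∩ H₀).card : ℝ) / ((S.card : ℝ) + 1 / q)))]
    rw [if_pos (Finset.mem_univ _)]
  rw [heq]
  apply Finset.measurable_sum
  intro S _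
  exact Measurable.ite (meas_sel_eq q S) measurable_const measurable_const

end Meas

end KnockoffAux

/-- Modified FDR control for knockoffs: under the coin-flip sign hypothesis on the null
statistics — equivalently, invariance of the law of `W` under flipping the signs of any subset of
null coordinates — the knockoff procedure at level `q` controls
`E[ |Ŝ ∩ H₀| / (|Ŝ| + 1/q) ] ≤ q`. -/
theorem knockoff_mFDR_control
    {Ω : Type*} [MeasurableSpace Ω] {μ : Measure Ω} [IsProbabilityMeasure μ]
    {p : ℕ} (W : Ω → Fin p → ℝ) (hW : Measurable W)
    (H₀ : Finset (Fin p))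
    (hsign : ∀ T : Finset (Fin p), T ⊆ H₀ →
      μ.map (fun ω => fun j => if j ∈ T then -(W ω j) else W ω j) = μ.map W)
    (q : ℝ) (hq0 : 0 < q) (hq1 : q < 1) :
    ∫ ω, (((knockoffSelected q (W ω)) ∩ H₀).card : ℝ) /
        (((knockoffSelected q (W ω)).card : ℝ) + 1 / q) ∂μ ≤ q := by
  classical
  let F : (Fin p → ℝ) → ℝ := fun v =>
    (((knockoffSelected q v) ∩ H₀).card : ℝ) / (((knockoffSelected q v).card : ℝ) + 1 / q)
  show (∫ ω, F (W ω) ∂μ) ≤ q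
  have hFmeas : Measurable F := KnockoffAux.meas_f q H₀
  have hFnonneg : ∀ v, 0 ≤ F v := by
    intro v
    apply div_nonneg (Nat.cast_nonneg _)
    positivity
  have hFle : ∀ v, F v ≤ (p:ℝ) * q := by
    intro v
    have h1 : ((knockoffSelected q v ∩ H₀).card : ℝ) ≤ (p:ℝ) := by
      have := Finset.card_le_univ (knockoffSelected q v ∩ H₀)
      rw [Fintype.card_fin] at this
      exact_mod_cast this
    have h2 : (0:ℝ) < 1/q := by positivity
    have h3 : (0:ℝ) ≤ ((knockoffSelected q v).card : ℝ) := Nat.cast_nonneg _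
    have h4 : F v ≤ ((knockoffSelected q v ∩ H₀).card : ℝ) / (1/q) := by
      apply div_le_div_of_nonneg_left (Nat.cast_nonneg _) h2
      linarith
    calc F v ≤ ((knockoffSelected q v ∩ H₀).card : ℝ) / (1/q) := h4
      _ = ((knockoffSelected q v ∩ H₀).card : ℝ) * q := by rw [one_div, div_inv_eq_mul]
      _ ≤ (p:ℝ) * q := mul_le_mul_of_nonneg_right h1 (le_of_lt hq0)
  have hflipmeas : ∀ T : Finset (Fin p),
      Measurable (fun v : Fin p → ℝ => KnockoffAux.flipSet T v) := by
    intro T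
    apply measurable_pi_lambda
    intro j
    unfold KnockoffAux.flipSet
    by_cases hj : j ∈ T
    · simp only [if_pos hj]
      exact (measurable_pi_apply j).neg
    · simp only [if_neg hj]
      exact measurable_pi_apply j
  have hInt : ∀ T : Finset (Fin p),
      Integrable (fun ω => F (KnockoffAux.flipSet T (W ω))) μ := by
    intro T
    have hm : Measurable fun ω => F (KnockoffAux.flipSet T (W ω)) :=
      hFmeas.comp ((hflipmeas T).comp hW)
    apply Integrable.mono' (integrable_const ((p:ℝ)*q)) hm.aestronglyMeasurable
    filter_upwards with ω
    rw [Real.norm_eq_abs, abs_of_nonneg (hFnonneg _)]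
    exact hFle _
  have htransport : ∀ T ∈ H₀.powerset,
      ∫ ω, F (KnockoffAux.flipSet T (W ω)) ∂μ = ∫ ω, F (W ω) ∂μ := by
    intro T hT
    have hTsub := Finset.mem_powerset.mp hT
    have hphi : Measurable (fun ω => KnockoffAux.flipSet T (W ω)) := (hflipmeas T).comp hW
    have h1 : ∫ ω, F (KnockoffAux.flipSet T (W ω)) ∂μ
        = ∫ v, F v ∂(μ.map (fun ω => KnockoffAux.flipSet T (W ω))) :=
      (integral_map hphi.aemeasurable hFmeas.aestronglyMeasurable).symm
    have heqmap : μ.map (fun ω => KnockoffAux.flipSet T (W ω)) = μ.map W := by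
      have h2 : (fun ω => KnockoffAux.flipSet T (W ω))
          = (fun ω => fun j => if j ∈ T then -(W ω j) else W ω j) := rfl
      rw [h2]
      exact hsign T hTsub
    rw [h1, heqmap, integral_map hW.aemeasurable hFmeas.aestronglyMeasurable]
  have h1 : ∑ T ∈ H₀.powerset, ∫ ω, F (KnockoffAux.flipSet T (W ω)) ∂μ
      = ((2^H₀.card : ℕ) : ℝ) * ∫ ω, F (W ω) ∂μ := by
    rw [Finset.sum_congr rfl htransport, Finset.sum_const, Finset.card_powerset, nsmul_eq_mul]
  have h2 : ∫ ω, (∑ T ∈ H₀.powerset, F (KnockoffAux.flipSet T (W ω))) ∂μ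
      = ∑ T ∈ H₀.powerset, ∫ ω, F (KnockoffAux.flipSet T (W ω)) ∂μ :=
    integral_finset_sum _ (fun T _ => hInt T)
  have h3 : ∫ ω, (∑ T ∈ H₀.powerset, F (KnockoffAux.flipSet T (W ω))) ∂μ
      ≤ ∫ _ω, (q * 2^H₀.card : ℝ) ∂μ := by
    apply integral_mono (integrable_finset_sum _ (fun T _ => hInt T)) (integrable_const _)
    intro ω
    exact KnockoffAux.det_bound q hq0 H₀ (W ω)
  have h4 : ∫ _ω, (q * 2^H₀.card : ℝ) ∂μ = q * 2^H₀.card := by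
    rw [integral_const]
    simp
  have h5 : ((2^H₀.card : ℕ) : ℝ) * ∫ ω, F (W ω) ∂μ ≤ q * 2^H₀.card := by
    rw [← h1, ← h2]
    rw [h4] at h3
    exact h3
  have hpow : (0:ℝ) < ((2^H₀.card : ℕ) : ℝ) := by
    have : (0:ℕ) < 2^H₀.card := Nat.pow_pos (by omega)
    exact_mod_cast this
  have h6 : q * 2^H₀.card = ((2^H₀.card : ℕ) : ℝ) * q := by
    push_cast
    ring
  rw [h6] at h5
  exact le_of_mul_le_mul_left h5 hpow
end

section
/- Let (Z_1, Z_2, Y) be a triple of random variables and construct Z_1* so that conditionally on (Z_2, Y), Z_1* has the conditional distribution of Z_1 given Z_2 (i.e., Z_1* | (Z_2, Y) =_d Z_1 | Z_2). If Y ⫫ Z_1 | Z_2, then for any measurable test statistic T = t(Z_1, Z_2, Y) and T* = t(Z_1*, Z_2, Y), the conditional distributions satisfy T | (Z_2, Y) =_d T* | (Z_2, Y). In particular T =_d T* unconditionally. -/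
set_option maxHeartbeats 1000000

open MeasureTheory ProbabilityTheory Set
open scoped ENNReal

namespace CRTAux

variable {Ω α β γ : Type*}

lemma compProd_condDistrib
    {Ω β E : Type*} [MeasurableSpace Ω]
    [MeasurableSpace β] [MeasurableSpace E] [StandardBorelSpace E] [Nonempty E]
    {μ : Measure Ω} [IsFiniteMeasure μ] {X : Ω → E} {V : Ω → β}
    (hX : Measurable X) (hV : Measurable V) :
    (μ.map V) ⊗ₘ condDistrib X V μ = μ.map fun ω => (V ω, X ω) := by
  haveI : IsFiniteMeasure (μ.map fun ω => (V ω, X ω)) :=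
    Measure.isFiniteMeasure_map μ _
  rw [condDistrib, ← Measure.fst_map_prodMk hX, Measure.disintegrate]

lemma map_compProd
    {α β E : Type*} [MeasurableSpace α] [MeasurableSpace β] [MeasurableSpace E]
    (ν : Measure α) [SFinite ν] (κ : Kernel α β) [IsMarkovKernel κ]
    {f : β × α → E} (hf : Measurable f) :
    (ν ⊗ₘ κ).map (fun p => (p.1, f (p.2, p.1)))
      = ν ⊗ₘ Kernel.map (Kernel.id ×ₖ κ) (fun q : α × β => f (q.2, q.1)) := by
  have hg : Measurable fun q : α × β => f (q.2, q.1) :=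
    hf.comp (measurable_snd.prodMk measurable_fst)
  have hG : Measurable fun p : α × β => (p.1, f (p.2, p.1)) := measurable_fst.prodMk hg
  haveI : IsMarkovKernel (Kernel.map (Kernel.id ×ₖ κ) (fun q : α × β => f (q.2, q.1))) :=
    Kernel.IsMarkovKernel.map _ hg
  ext s hs
  rw [Measure.map_apply hG hs, Measure.compProd_apply (hG hs), Measure.compProd_apply hs]
  refine lintegral_congr fun a => ?_
  rw [Kernel.map_apply' _ hg _ (measurable_prodMk_left hs), Kernel.prod_apply,
    Kernel.id_apply, Measure.dirac_prod,
    Measure.map_apply measurable_prodMk_left (hg (measurable_prodMk_left hs))]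
  congr 1


lemma compProd_of_condIndep
    {Ω α β γ : Type*}
    [MeasurableSpace Ω] [StandardBorelSpace Ω] [Nonempty Ω]
    [MeasurableSpace α] [StandardBorelSpace α] [Nonempty α]
    [MeasurableSpace β] [MeasurableSpace γ]
    {μ : Measure Ω} [IsProbabilityMeasure μ]
    {Z₁ : Ω → α} {Z₂ : Ω → β} {Y : Ω → γ}
    (hZ₁ : Measurable Z₁) (hZ₂ : Measurable Z₂) (hY : Measurable Y)
    (hnull : CondIndepFun (MeasurableSpace.comap Z₂ inferInstance) hZ₂.comap_le Y Z₁ μ) :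
    μ.map (fun ω => ((Z₂ ω, Y ω), Z₁ ω))
      = (μ.map fun ω => (Z₂ ω, Y ω)) ⊗ₘ Kernel.prodMkRight γ (condDistrib Z₁ Z₂ μ) := by
  have hm : MeasurableSpace.comap Z₂ inferInstance ≤ _ := hZ₂.comap_le
  have hV : Measurable fun ω => (Z₂ ω, Y ω) := hZ₂.prodMk hY
  haveI : IsProbabilityMeasure (μ.map fun ω => (Z₂ ω, Y ω)) :=
    Measure.isProbabilityMeasure_map hV.aemeasurable
  -- key rectangle computation
  have key : ∀ {A : Set α}, MeasurableSet A → ∀ {S₂ : Set β}, MeasurableSet S₂ →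
      ∀ {SY : Set γ}, MeasurableSet SY →
      ∫⁻ ω in Z₂ ⁻¹' S₂ ∩ Y ⁻¹' SY, condDistrib Z₁ Z₂ μ (Z₂ ω) A ∂μ
        = μ (Z₂ ⁻¹' S₂ ∩ Y ⁻¹' SY ∩ Z₁ ⁻¹' A) := by
    intro A hA S₂ hS₂ SY hSY
    set κZ := condDistrib Z₁ Z₂ μ with hκZ
    have hfm : Measurable fun ω => κZ (Z₂ ω) A := (Kernel.measurable_coe _ hA).comp hZ₂
    set C := Z₂ ⁻¹' S₂ with hC_def
    set D := Y ⁻¹' SY with hD_def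
    set P := Z₁ ⁻¹' A with hP_def
    have hC : MeasurableSet C := hZ₂ hS₂
    have hD : MeasurableSet D := hY hSY
    have hP : MeasurableSet P := hZ₁ hA
    have hCm : MeasurableSet[MeasurableSpace.comap Z₂ inferInstance] C := ⟨S₂, hS₂, rfl⟩
    have h1 : (fun ω => (κZ (Z₂ ω) A).toReal) =ᵐ[μ] μ⟦P | MeasurableSpace.comap Z₂ inferInstance⟧ :=
      condDistrib_ae_eq_condExp hZ₂ hZ₁ hA
    have hind_int : Integrable (D.indicator fun _ => (1:ℝ)) μ := (integrable_const 1).indicator hD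
    have hDP_int : Integrable ((D ∩ P).indicator fun _ => (1:ℝ)) μ :=
      (integrable_const 1).indicator (hD.inter hP)
    set g := μ⟦P | MeasurableSpace.comap Z₂ inferInstance⟧ with hg_def
    have hgsm : StronglyMeasurable[MeasurableSpace.comap Z₂ inferInstance] g := stronglyMeasurable_condExp
    have hgm : AEStronglyMeasurable g μ := (hgsm.mono hm).aestronglyMeasurable
    have hg_int : Integrable g μ := integrable_condExp
    have hmul_int : Integrable (g * D.indicator fun _ => (1:ℝ)) μ := by
      refine hg_int.mono
        (hgm.mul (measurable_const.indicator hD).aestronglyMeasurable)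
        (Filter.Eventually.of_forall fun ω => ?_)
      by_cases hω : ω ∈ D <;>
        simp [Pi.mul_apply, Set.indicator_of_mem, Set.indicator_of_notMem, hω,
          Real.norm_eq_abs, abs_mul, abs_nonneg]
    have hpull : μ[g * D.indicator (fun _ => (1:ℝ)) | MeasurableSpace.comap Z₂ inferInstance] =ᵐ[μ] g * μ⟦D | MeasurableSpace.comap Z₂ inferInstance⟧ :=
      condExp_mul_of_stronglyMeasurable_left hgsm hmul_int hind_int
    have hCI : μ⟦D ∩ P | MeasurableSpace.comap Z₂ inferInstance⟧ =ᵐ[μ] fun ω => (μ⟦D | MeasurableSpace.comap Z₂ inferInstance⟧) ω * (μ⟦P | MeasurableSpace.comap Z₂ inferInstance⟧) ω :=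
      (condIndepFun_iff_condExp_inter_preimage_eq_mul hY hZ₁).mp hnull SY A hSY hA
    have hstep : μ[g * D.indicator (fun _ => (1:ℝ)) | MeasurableSpace.comap Z₂ inferInstance] =ᵐ[μ] μ⟦D ∩ P | MeasurableSpace.comap Z₂ inferInstance⟧ := by
      filter_upwards [hpull, hCI] with ω h₁ h₂
      rw [h₁, Pi.mul_apply, h₂, mul_comm]
    have hreal : ∫ ω in C ∩ D, (κZ (Z₂ ω) A).toReal ∂μ = (μ (C ∩ D ∩ P)).toReal := by
      calc ∫ ω in C ∩ D, (κZ (Z₂ ω) A).toReal ∂μ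
          = ∫ ω in C ∩ D, g ω ∂μ := integral_congr_ae (ae_restrict_of_ae h1)
        _ = ∫ ω in C, D.indicator g ω ∂μ := (setIntegral_indicator hD).symm
        _ = ∫ ω in C, (g * D.indicator fun _ => (1:ℝ)) ω ∂μ := by
            refine integral_congr_ae (Filter.Eventually.of_forall fun ω => ?_)
            by_cases hω : ω ∈ D <;> simp [Set.indicator_apply, hω]
        _ = ∫ ω in C, (μ[g * D.indicator (fun _ => (1:ℝ)) | MeasurableSpace.comap Z₂ inferInstance]) ω ∂μ :=
            (setIntegral_condExp hm hmul_int hCm).symm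
        _ = ∫ ω in C, (μ⟦D ∩ P | MeasurableSpace.comap Z₂ inferInstance⟧) ω ∂μ := integral_congr_ae (ae_restrict_of_ae hstep)
        _ = ∫ ω in C, (D ∩ P).indicator (fun _ => (1:ℝ)) ω ∂μ := setIntegral_condExp hm hDP_int hCm
        _ = ∫ _ω in C ∩ (D ∩ P), (1:ℝ) ∂μ := setIntegral_indicator (hD.inter hP)
        _ = (μ (C ∩ D ∩ P)).toReal := by
            rw [setIntegral_const, smul_eq_mul, mul_one, Set.inter_assoc, measureReal_def]
    have h_toReal : (∫⁻ ω in C ∩ D, κZ (Z₂ ω) A ∂μ).toReal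
        = ∫ ω in C ∩ D, (κZ (Z₂ ω) A).toReal ∂μ :=
      (integral_toReal hfm.aemeasurable
        (Filter.Eventually.of_forall fun ω => lt_of_le_of_lt prob_le_one ENNReal.one_lt_top)).symm
    have hfin : ∫⁻ ω in C ∩ D, κZ (Z₂ ω) A ∂μ ≠ ∞ := by
      refine ((lintegral_mono fun ω => (prob_le_one : κZ (Z₂ ω) A ≤ 1)).trans_lt ?_).ne
      rw [setLIntegral_one]
      exact measure_lt_top μ _
    exact (ENNReal.toReal_eq_toReal_iff' hfin (measure_ne_top μ _)).mp (h_toReal.trans hreal)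
  -- inner equality of measures on β × γ, for a fixed A
  have inner : ∀ {A : Set α}, MeasurableSet A →
      (μ.restrict (Z₁ ⁻¹' A)).map (fun ω => (Z₂ ω, Y ω))
        = (μ.map fun ω => (Z₂ ω, Y ω)).withDensity
            (fun pr => condDistrib Z₁ Z₂ μ pr.1 A) := by
    intro A hA
    have hfpr : Measurable fun pr : β × γ => condDistrib Z₁ Z₂ μ pr.1 A :=
      (Kernel.measurable_coe _ hA).comp measurable_fst
    haveI : IsFiniteMeasure ((μ.restrict (Z₁ ⁻¹' A)).map fun ω => (Z₂ ω, Y ω)) :=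
      Measure.isFiniteMeasure_map _ _
    have both : ∀ {S₂ : Set β}, MeasurableSet S₂ → ∀ {SY : Set γ}, MeasurableSet SY →
        ((μ.restrict (Z₁ ⁻¹' A)).map fun ω => (Z₂ ω, Y ω)) (S₂ ×ˢ SY)
          = ((μ.map fun ω => (Z₂ ω, Y ω)).withDensity
              (fun pr => condDistrib Z₁ Z₂ μ pr.1 A)) (S₂ ×ˢ SY) := by
      intro S₂ hS₂ SY hSY
      rw [Measure.map_apply hV (hS₂.prod hSY), Measure.restrict_apply (hV (hS₂.prod hSY)),
        Set.mk_preimage_prod, withDensity_apply _ (hS₂.prod hSY),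
        setLIntegral_map (hS₂.prod hSY) hfpr hV, Set.mk_preimage_prod]
      exact (key hA hS₂ hSY).symm
    refine ext_of_generate_finite _ generateFrom_prod.symm isPiSystem_prod ?_ ?_
    · rintro _ ⟨S₂, hS₂, SY, hSY, rfl⟩
      exact both hS₂ hSY
    · have h := both MeasurableSet.univ MeasurableSet.univ
      rwa [Set.univ_prod_univ] at h
  -- outer ext
  refine ext_of_generate_finite _ generateFrom_prod.symm isPiSystem_prod ?_ ?_
  · rintro _ ⟨S, hS, A, hA, rfl⟩
    replace hS : MeasurableSet S := hS
    replace hA : MeasurableSet A := hA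
    rw [Measure.map_apply (hV.prodMk hZ₁) (hS.prod hA), Set.mk_preimage_prod,
      Measure.compProd_apply_prod hS hA]
    simp_rw [Kernel.prodMkRight_apply]
    calc μ ((fun ω => (Z₂ ω, Y ω)) ⁻¹' S ∩ Z₁ ⁻¹' A)
        = ((μ.restrict (Z₁ ⁻¹' A)).map fun ω => (Z₂ ω, Y ω)) S := by
          rw [Measure.map_apply hV hS, Measure.restrict_apply (hV hS)]
      _ = ((μ.map fun ω => (Z₂ ω, Y ω)).withDensity
            (fun pr => condDistrib Z₁ Z₂ μ pr.1 A)) S := by rw [inner hA]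
      _ = ∫⁻ pr in S, condDistrib Z₁ Z₂ μ pr.1 A ∂(μ.map fun ω => (Z₂ ω, Y ω)) :=
          withDensity_apply _ hS
  · rw [Measure.map_apply (hV.prodMk hZ₁) MeasurableSet.univ, Set.preimage_univ,
      Measure.compProd_apply_univ]
    simp

end CRTAux

open MeasureTheory ProbabilityTheory

/-- Validity lemma for the conditional randomization test: if `Z₁*` is drawn, conditionally on
`(Z₂, Y)`, from the conditional distribution of `Z₁` given `Z₂`, and `Y ⫫ Z₁ | Z₂`, then for any
measurable statistic `T = t(Z₁, Z₂, Y)` and `T* = t(Z₁*, Z₂, Y)`, the conditional laws of `T`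
and `T*` given `(Z₂, Y)` coincide a.e.; in particular `T =_d T*`. -/
theorem conditional_randomization_validity
    {Ω α β γ : Type*}
    [MeasurableSpace Ω] [StandardBorelSpace Ω] [Nonempty Ω]
    [MeasurableSpace α] [StandardBorelSpace α] [Nonempty α]
    [MeasurableSpace β] [StandardBorelSpace β] [Nonempty β]
    [MeasurableSpace γ] [StandardBorelSpace γ] [Nonempty γ]
    {μ : Measure Ω} [IsProbabilityMeasure μ]
    (Z₁ Z₁s : Ω → α) (Z₂ : Ω → β) (Y : Ω → γ)
    (hZ₁ : Measurable Z₁) (hZ₁s : Measurable Z₁s) (hZ₂ : Measurable Z₂) (hY : Measurable Y)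
    (hresample : ∀ᵐ pr ∂(μ.map fun ω => (Z₂ ω, Y ω)),
      condDistrib Z₁s (fun ω => (Z₂ ω, Y ω)) μ pr = condDistrib Z₁ Z₂ μ pr.1)
    (hnull : CondIndepFun (MeasurableSpace.comap Z₂ inferInstance) hZ₂.comap_le Y Z₁ μ)
    (t : α × β × γ → ℝ) (ht : Measurable t) :
    (∀ᵐ pr ∂(μ.map fun ω => (Z₂ ω, Y ω)),
      condDistrib (fun ω => t (Z₁ ω, Z₂ ω, Y ω)) (fun ω => (Z₂ ω, Y ω)) μ pr
        = condDistrib (fun ω => t (Z₁s ω, Z₂ ω, Y ω)) (fun ω => (Z₂ ω, Y ω)) μ pr) ∧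
    μ.map (fun ω => t (Z₁ ω, Z₂ ω, Y ω)) = μ.map (fun ω => t (Z₁s ω, Z₂ ω, Y ω)) := by
  have hV : Measurable fun ω => (Z₂ ω, Y ω) := hZ₂.prodMk hY
  have hT : Measurable fun ω => t (Z₁ ω, Z₂ ω, Y ω) := ht.comp (hZ₁.prodMk (hZ₂.prodMk hY))
  have hTs : Measurable fun ω => t (Z₁s ω, Z₂ ω, Y ω) := ht.comp (hZ₁s.prodMk (hZ₂.prodMk hY))
  haveI : IsProbabilityMeasure (μ.map fun ω => (Z₂ ω, Y ω)) :=
    Measure.isProbabilityMeasure_map hV.aemeasurable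
  have hg : Measurable fun q : (β × γ) × α => t (q.2, q.1) :=
    ht.comp (measurable_snd.prodMk measurable_fst)
  haveI : IsMarkovKernel (Kernel.map (Kernel.id ×ₖ Kernel.prodMkRight γ (condDistrib Z₁ Z₂ μ))
      (fun q : (β × γ) × α => t (q.2, q.1))) := Kernel.IsMarkovKernel.map _ hg
  have h₁ : μ.map (fun ω => ((Z₂ ω, Y ω), Z₁ ω))
      = (μ.map fun ω => (Z₂ ω, Y ω)) ⊗ₘ Kernel.prodMkRight γ (condDistrib Z₁ Z₂ μ) :=
    CRTAux.compProd_of_condIndep hZ₁ hZ₂ hY hnull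
  have h₂ : μ.map (fun ω => ((Z₂ ω, Y ω), Z₁s ω))
      = (μ.map fun ω => (Z₂ ω, Y ω)) ⊗ₘ Kernel.prodMkRight γ (condDistrib Z₁ Z₂ μ) := by
    rw [← CRTAux.compProd_condDistrib hZ₁s hV]
    refine Measure.compProd_congr ?_
    filter_upwards [hresample] with pr h
    rw [h, Kernel.prodMkRight_apply]
  have hmapT : μ.map (fun ω => ((Z₂ ω, Y ω), t (Z₁ ω, Z₂ ω, Y ω)))
      = (μ.map fun ω => (Z₂ ω, Y ω)) ⊗ₘ
        Kernel.map (Kernel.id ×ₖ Kernel.prodMkRight γ (condDistrib Z₁ Z₂ μ))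
          (fun q : (β × γ) × α => t (q.2, q.1)) := by
    calc μ.map (fun ω => ((Z₂ ω, Y ω), t (Z₁ ω, Z₂ ω, Y ω)))
        = (μ.map fun ω => ((Z₂ ω, Y ω), Z₁ ω)).map
            (fun p : (β × γ) × α => (p.1, t (p.2, p.1))) := by
          rw [Measure.map_map (measurable_fst.prodMk hg) (hV.prodMk hZ₁)]; rfl
      _ = ((μ.map fun ω => (Z₂ ω, Y ω)) ⊗ₘ Kernel.prodMkRight γ (condDistrib Z₁ Z₂ μ)).map
            (fun p : (β × γ) × α => (p.1, t (p.2, p.1))) := by rw [h₁]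
      _ = _ := CRTAux.map_compProd _ _ ht
  have hmapTs : μ.map (fun ω => ((Z₂ ω, Y ω), t (Z₁s ω, Z₂ ω, Y ω)))
      = (μ.map fun ω => (Z₂ ω, Y ω)) ⊗ₘ
        Kernel.map (Kernel.id ×ₖ Kernel.prodMkRight γ (condDistrib Z₁ Z₂ μ))
          (fun q : (β × γ) × α => t (q.2, q.1)) := by
    calc μ.map (fun ω => ((Z₂ ω, Y ω), t (Z₁s ω, Z₂ ω, Y ω)))
        = (μ.map fun ω => ((Z₂ ω, Y ω), Z₁s ω)).map
            (fun p : (β × γ) × α => (p.1, t (p.2, p.1))) := by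
          rw [Measure.map_map (measurable_fst.prodMk hg) (hV.prodMk hZ₁s)]; rfl
      _ = ((μ.map fun ω => (Z₂ ω, Y ω)) ⊗ₘ Kernel.prodMkRight γ (condDistrib Z₁ Z₂ μ)).map
            (fun p : (β × γ) × α => (p.1, t (p.2, p.1))) := by rw [h₂]
      _ = _ := CRTAux.map_compProd _ _ ht
  have hT_eq := condDistrib_ae_eq_of_measure_eq_compProd_of_measurable hV hT hmapT
  have hTs_eq := condDistrib_ae_eq_of_measure_eq_compProd_of_measurable hV hTs hmapTs
  constructor
  · filter_upwards [hT_eq, hTs_eq] with pr h h' using h.trans h'.symm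
  · have e1 : μ.map (fun ω => t (Z₁ ω, Z₂ ω, Y ω))
        = (μ.map (fun ω => ((Z₂ ω, Y ω), t (Z₁ ω, Z₂ ω, Y ω)))).map Prod.snd := by
      rw [Measure.map_map measurable_snd (hV.prodMk hT)]; rfl
    have e2 : μ.map (fun ω => t (Z₁s ω, Z₂ ω, Y ω))
        = (μ.map (fun ω => ((Z₂ ω, Y ω), t (Z₁s ω, Z₂ ω, Y ω)))).map Prod.snd := by
      rw [Measure.map_map measurable_snd (hV.prodMk hTs)]; rfl
    rw [e1, e2, hmapT, hmapTs]
end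

section
/- In the Sequential Conditional Independent Pairs algorithm for discrete random variables, the joint probability mass function of (X_{1:p}, X̃_{1:j}) after step j equals L(X_{-j}, X_j, X̃_{1:j-1}) · L(X_{-j}, X̃_j, X̃_{1:j-1}) / Σ_u L(X_{-j}, u, X̃_{1:j-1}), where L denotes the joint PMF of (X_{1:p}, X̃_{1:j-1}) after step j-1; in particular this expression is symmetric under exchanging the values of X_j and X̃_j. -/
/-!
Conditional independence and the equality of conditional laws give
`P(x, x̃, u) · P(x_{-j}, x̃) = L(x, x̃) · L(x_{-j}, u, x̃)`, and `P(x_{-j}, x̃)` is the sum of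
`L(x_{-j}, u', x̃)` over the values `u'` of the `j`-th coordinate. Dividing yields the formula
(when `P(x_{-j}, x̃) = 0` both sides vanish), and the formula is visibly symmetric in `x_j ↔ u`.
-/

open MeasureTheory Function

namespace MeasureTheory

variable {Ω : Type*} [MeasurableSpace Ω] (μ : Measure Ω)

theorem measure_eq_sum_measure_preimage_singleton_inter {β : Type*} [MeasurableSpace β]
    [MeasurableSingletonClass β] [Fintype β] {f : Ω → β} (hf : Measurable f) (s : Set Ω) :
    μ s = ∑ b, μ (f ⁻¹' {b} ∩ s) := by
  calc μ s = μ.restrict s (f ⁻¹' ↑(Finset.univ : Finset β)) := by simp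
    _ = ∑ b, μ.restrict s (f ⁻¹' {b}) :=
      (sum_measure_preimage_singleton _ fun b _ => hf (measurableSet_singleton b)).symm
    _ = ∑ b, μ (f ⁻¹' {b} ∩ s) := by
      simp only [Measure.restrict_apply (hf (measurableSet_singleton _))]

theorem measure_agreeOff_inter_eq_sum_measure_update {ι α : Type*} [DecidableEq ι]
    [MeasurableSpace α] [MeasurableSingletonClass α] [Fintype α] {X : Ω → ι → α} {j : ι}
    (hXj : Measurable fun ω => X ω j) (x : ι → α) (s : Set Ω) :
    μ ({ω | ∀ i ≠ j, X ω i = x i} ∩ s) = ∑ u, μ ({ω | X ω = update x j u} ∩ s) := by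
  rw [measure_eq_sum_measure_preimage_singleton_inter μ hXj]
  refine Finset.sum_congr rfl fun u _ => congrArg μ ?_
  ext ω
  simp only [Set.mem_inter_iff, Set.mem_preimage, Set.mem_singleton_iff, Set.mem_ofPred_eq,
    eq_update_iff]
  tauto

end MeasureTheory

theorem ENNReal.eq_mul_div_of_mul_eq {a b c d : ENNReal} (hd : d ≠ ⊤) (ha : a ≤ d) (hb : b ≤ d)
    (h : a * d = b * c) : a = b * c / d := by
  rcases eq_or_ne d 0 with rfl | hd0
  · simp [nonpos_iff_eq_zero.1 ha, nonpos_iff_eq_zero.1 hb]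
  · rw [ENNReal.eq_div_iff hd0 hd, mul_comm, h]

theorem mul_div_sum_update_swap {ι α R : Type*} [DecidableEq ι] [Fintype α] [CommSemiring R]
    [Div R] (L : (ι → α) → R) (x : ι → α) (j : ι) (u : α) :
    L (update x j u) * L (update (update x j u) j (x j)) / ∑ u', L (update (update x j u) j u')
      = L x * L (update x j u) / ∑ u', L (update x j u') := by
  simp only [update_idem, update_eq_self, mul_comm (L x)]

theorem scip_step_pmf_formula_general
    {Ω A : Type*} [MeasurableSpace Ω] [MeasurableSpace A] [MeasurableSingletonClass A]
    [Fintype A]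
    {μ : Measure Ω} [IsProbabilityMeasure μ]
    {p m : ℕ} (j : Fin p)
    (X : Ω → Fin p → A) (Xt : Ω → Fin m → A) (T : Ω → A)
    (hX : Measurable X)
    -- `T` is conditionally independent of `X_j` given `(X_{-j}, X̃_{1:j-1})`:
    (hci : ∀ (x : Fin p → A) (xt : Fin m → A) (u : A),
      μ {ω | X ω = x ∧ Xt ω = xt ∧ T ω = u}
          * μ {ω | (∀ i, i ≠ j → X ω i = x i) ∧ Xt ω = xt}
        = μ {ω | X ω = x ∧ Xt ω = xt}
          * μ {ω | (∀ i, i ≠ j → X ω i = x i) ∧ Xt ω = xt ∧ T ω = u})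
    -- `T` has the same conditional law given `(X_{-j}, X̃_{1:j-1})` as `X_j`:
    (hlaw : ∀ (x : Fin p → A) (xt : Fin m → A) (u : A),
      μ {ω | (∀ i, i ≠ j → X ω i = x i) ∧ Xt ω = xt ∧ T ω = u}
        = μ {ω | X ω = Function.update x j u ∧ Xt ω = xt}) :
    ∀ (x : Fin p → A) (xt : Fin m → A) (u : A),
      (μ {ω | X ω = x ∧ Xt ω = xt ∧ T ω = u}
          = μ {ω | X ω = x ∧ Xt ω = xt}
            * μ {ω | X ω = Function.update x j u ∧ Xt ω = xt}
            / ∑ u' : A, μ {ω | X ω = Function.update x j u' ∧ Xt ω = xt}) ∧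
      μ {ω | X ω = x ∧ Xt ω = xt ∧ T ω = u}
          = μ {ω | X ω = Function.update x j u ∧ Xt ω = xt ∧ T ω = x j} := by
  have marginal (x : Fin p → A) (xt : Fin m → A) :
      μ {ω | (∀ i, i ≠ j → X ω i = x i) ∧ Xt ω = xt}
        = ∑ u', μ {ω | X ω = update x j u' ∧ Xt ω = xt} :=
    measure_agreeOff_inter_eq_sum_measure_update μ ((measurable_pi_apply j).comp hX) x _
  have formula (x : Fin p → A) (xt : Fin m → A) (u : A) :
      μ {ω | X ω = x ∧ Xt ω = xt ∧ T ω = u}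
        = μ {ω | X ω = x ∧ Xt ω = xt} * μ {ω | X ω = update x j u ∧ Xt ω = xt}
          / ∑ u', μ {ω | X ω = update x j u' ∧ Xt ω = xt} := by
    rw [← marginal]
    refine ENNReal.eq_mul_div_of_mul_eq (measure_ne_top _ _) (measure_mono ?_) (measure_mono ?_)
      (by rw [hci, hlaw])
    · rintro ω ⟨rfl, rfl, -⟩
      exact ⟨fun _ _ => rfl, rfl⟩
    · rintro ω ⟨rfl, rfl⟩
      exact ⟨fun _ _ => rfl, rfl⟩
  intro x xt u
  refine ⟨formula x xt u, ?_⟩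
  rw [formula, formula]
  exact (mul_div_sum_update_swap (fun y => μ {ω | X ω = y ∧ Xt ω = xt}) x j u).symm

/-- The joint PMF formula at a step of the Sequential Conditional Independent Pairs algorithm
for discrete variables: if the new knockoff `T` (for coordinate `j`) is conditionally
independent of `X_j` given `(X_{-j}, X̃_{1:j-1})` with the same conditional law as `X_j`, then
the joint PMF of `(X, X̃_{1:j-1}, T)` equals
`L(x, x̃) · L(x_{-j}, u, x̃) / ∑_{u'} L(x_{-j}, u', x̃)`, where `L` is the joint PMF of
`(X, X̃_{1:j-1})`; in particular it is symmetric under exchanging the values of `X_j` and `T`. -/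
theorem scip_step_pmf_formula
    {Ω A : Type*} [MeasurableSpace Ω] [MeasurableSpace A] [MeasurableSingletonClass A]
    [Fintype A]
    {μ : Measure Ω} [IsProbabilityMeasure μ]
    {p m : ℕ} (j : Fin p)
    (X : Ω → Fin p → A) (Xt : Ω → Fin m → A) (T : Ω → A)
    (hX : Measurable X) (hXt : Measurable Xt) (hT : Measurable T)
    -- `T` is conditionally independent of `X_j` given `(X_{-j}, X̃_{1:j-1})`:
    (hci : ∀ (x : Fin p → A) (xt : Fin m → A) (u : A),
      μ {ω | X ω = x ∧ Xt ω = xt ∧ T ω = u}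
          * μ {ω | (∀ i, i ≠ j → X ω i = x i) ∧ Xt ω = xt}
        = μ {ω | X ω = x ∧ Xt ω = xt}
          * μ {ω | (∀ i, i ≠ j → X ω i = x i) ∧ Xt ω = xt ∧ T ω = u})
    -- `T` has the same conditional law given `(X_{-j}, X̃_{1:j-1})` as `X_j`:
    (hlaw : ∀ (x : Fin p → A) (xt : Fin m → A) (u : A),
      μ {ω | (∀ i, i ≠ j → X ω i = x i) ∧ Xt ω = xt ∧ T ω = u}
        = μ {ω | X ω = Function.update x j u ∧ Xt ω = xt}) :
    ∀ (x : Fin p → A) (xt : Fin m → A) (u : A),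
      (μ {ω | X ω = x ∧ Xt ω = xt ∧ T ω = u}
          = μ {ω | X ω = x ∧ Xt ω = xt}
            * μ {ω | X ω = Function.update x j u ∧ Xt ω = xt}
            / ∑ u' : A, μ {ω | X ω = Function.update x j u' ∧ Xt ω = xt}) ∧
      μ {ω | X ω = x ∧ Xt ω = xt ∧ T ω = u}
          = μ {ω | X ω = Function.update x j u ∧ Xt ω = xt ∧ T ω = x j} :=
  scip_step_pmf_formula_general j X Xt T hX hci hlaw
end

section
/- Suppose the data is split into two independent parts ((X^(1), y^(1)) and (X^(2), y^(2))) with i.i.d. rows; knockoffs for part 2 are constructed as valid model-free knockoffs X̃^(2) (using Lemma 3.2's exchangeability), while for part 1 one sets X̃^(1) = X^(1). Then for any subset S ⊆ H_0 of null variables, the combined data satisfies ([X, X̃]_{swap(S)}, y) =_d ([X, X̃], y), so the knockoff filter applied to the combined data retains FDR control. -/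
open MeasureTheory ProbabilityTheory

/-- Swap originals and knockoffs on the coordinates in `S`. -/
def pairSwap {p : ℕ} {𝒳 : Type*} (S : Finset (Fin p))
    (v : (Fin p → 𝒳) × (Fin p → 𝒳)) : (Fin p → 𝒳) × (Fin p → 𝒳) :=
  (fun i => if i ∈ S then v.2 i else v.1 i, fun i => if i ∈ S then v.1 i else v.2 i)

section PairSwap

variable {p : ℕ} {𝒳 : Type*}

@[simp]
lemma pairSwap_empty (v : (Fin p → 𝒳) × (Fin p → 𝒳)) : pairSwap ∅ v = v := by
  simp [pairSwap]

@[simp]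
lemma pairSwap_self (S : Finset (Fin p)) (x : Fin p → 𝒳) : pairSwap S (x, x) = (x, x) := by
  simp [pairSwap]

@[fun_prop]
lemma measurable_pairSwap [MeasurableSpace 𝒳] (S : Finset (Fin p)) :
    Measurable (pairSwap (𝒳 := 𝒳) S) := by
  refine .prodMk (measurable_pi_lambda _ fun i => ?_) (measurable_pi_lambda _ fun i => ?_) <;>
    split_ifs <;> fun_prop

/-- The sample `(X, X̃, y)` of `n` rows, arranged as `([X, X̃]_{swap(S)}, y)`. -/
def swapSample {n : ℕ} {𝒴 : Type*} (S : Finset (Fin p))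
    (d : (Fin n → Fin p → 𝒳) × (Fin n → Fin p → 𝒳) × (Fin n → 𝒴)) :
    (Fin n → (Fin p → 𝒳) × (Fin p → 𝒳)) × (Fin n → 𝒴) :=
  (fun r => pairSwap S (d.1 r, d.2.1 r), d.2.2)

@[fun_prop]
lemma measurable_swapSample {n : ℕ} {𝒴 : Type*} [MeasurableSpace 𝒳] [MeasurableSpace 𝒴]
    (S : Finset (Fin p)) : Measurable (swapSample (n := n) (𝒳 := 𝒳) (𝒴 := 𝒴) S) := by
  unfold swapSample
  fun_prop

end PairSwap

/-- Knockoffs with a selection subsample: if the data is split into two independent parts, the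
knockoffs for part 1 are taken to be identical copies of the originals (`X̃⁽¹⁾ = X⁽¹⁾`), and the
knockoffs for part 2 satisfy null-swap exchangeability, then the combined data satisfies
null-swap exchangeability: for any subset `S ⊆ H₀` of null variables,
`([X, X̃]_{swap(S)}, y) =_d ([X, X̃], y)`. -/
theorem split_knockoffs_null_swap_exchangeable
    {Ω : Type*} [MeasurableSpace Ω] {μ : Measure Ω} [IsProbabilityMeasure μ]
    {p n₁ n₂ : ℕ}
    (X₁ : Ω → Fin n₁ → Fin p → ℝ) (y₁ : Ω → Fin n₁ → ℝ)
    (X₂ Xt₂ : Ω → Fin n₂ → Fin p → ℝ) (y₂ : Ω → Fin n₂ → ℝ)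
    (hX₁ : Measurable X₁) (hy₁ : Measurable y₁)
    (hX₂ : Measurable X₂) (hXt₂ : Measurable Xt₂) (hy₂ : Measurable y₂)
    (hparts : IndepFun (fun ω => (X₁ ω, y₁ ω)) (fun ω => (X₂ ω, Xt₂ ω, y₂ ω)) μ)
    (H₀ : Finset (Fin p))
    (hexch₂ : ∀ S : Finset (Fin p), S ⊆ H₀ →
      μ.map (fun ω => ((fun r => pairSwap S (X₂ ω r, Xt₂ ω r)), y₂ ω))
        = μ.map (fun ω => ((fun r => (X₂ ω r, Xt₂ ω r)), y₂ ω))) :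
    ∀ S : Finset (Fin p), S ⊆ H₀ →
      μ.map (fun ω =>
          ((fun r => pairSwap S (X₁ ω r, X₁ ω r)),
           (fun r => pairSwap S (X₂ ω r, Xt₂ ω r)), y₁ ω, y₂ ω))
        = μ.map (fun ω =>
          ((fun r => (X₁ ω r, X₁ ω r)),
           (fun r => (X₂ ω r, Xt₂ ω r)), y₁ ω, y₂ ω)) := by
  intro S hS
  have hpart₁ : IdentDistrib (fun ω => (X₁ ω, y₁ ω)) (fun ω => (X₁ ω, y₁ ω)) μ μ :=
    .refl (by fun_prop)
  have hpart₂ : IdentDistrib (fun ω => swapSample S (X₂ ω, Xt₂ ω, y₂ ω))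
      (fun ω => swapSample ∅ (X₂ ω, Xt₂ ω, y₂ ω)) μ μ :=
    ⟨by fun_prop, by fun_prop, by simpa [swapSample] using hexch₂ S hS⟩
  have hjoint := hpart₁.prodMk hpart₂ (hparts.comp measurable_id (measurable_swapSample S))
    (hparts.comp measurable_id (measurable_swapSample ∅))
  -- Part 1 enters with `X̃⁽¹⁾ = X⁽¹⁾`, on which the swap acts trivially.
  have hlayout := (hjoint.comp (u := fun q => ((fun r => (q.1.1 r, q.1.1 r)), q.2.1, q.1.2, q.2.2))
    (by fun_prop)).map_eq
  simpa [Function.comp_def, swapSample] using hlayout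
end
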